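/- arXiv:1102.2035 — 10 statements merged into one kernel-verified Lean document; each statement's English description precedes it below -/
import Mathlib

section
/- Let p be a prime and let k₊, k₋ be integers with 0 < k₋ < k₊ and k₊ + k₋ = p - 1, and set M = [-k₋, k₊]*. For each ℓ ≥ 1 define Sℓ ⊆ ℤ/p^ℓℤ recursively by S₁ = {1} and S_{i+1} = p·S_i ∪ {s ∈ ℤ/p^{i+1}ℤ : s ≡ 1 (mod p)}, where p·S_i denotes the image of S_i under the map ℤ/p^iℤ → ℤ/p^{i+1}ℤ sending the residue of x to the residue of p·x. Then M and S_ℓ split ℤ/p^ℓℤ, and |S_ℓ| = (p^ℓ - 1)/(p - 1). -/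
/-- `M` and `S` split the additive abelian group `G`: the map `(m, s) ↦ m • s`
is a bijection from `M × S` onto `G \ {0}`. -/
def Splits {G : Type*} [AddCommGroup G] (M : Set ℤ) (S : Set G) : Prop :=
  Set.BijOn (fun p : ℤ × G => p.1 • p.2) (M ×ˢ S) {g : G | g ≠ 0}

/-- The recursively defined splitter sets: `splitterSet p ℓ` is the set `S_{ℓ+1} ⊆ ℤ/p^{ℓ+1}ℤ`,
with `S₁ = {1}` and
`S_{i+1} = p·S_i ∪ {s ∈ ℤ/p^{i+1}ℤ : s ≡ 1 (mod p)}`, where `p·S_i` is the image of `S_i`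
under the map sending the residue of `x` to the residue of `p·x`. -/
def splitterSet (p : ℕ) : (ℓ : ℕ) → Set (ZMod (p ^ (ℓ + 1)))
  | 0 => {1}
  | i + 1 =>
      (fun x : ZMod (p ^ (i + 1)) => ((p * x.val : ℕ) : ZMod (p ^ (i + 2)))) '' splitterSet p i
        ∪ {s : ZMod (p ^ (i + 2)) | s.val % p = 1}


/-!
Reduce modulo `p` by `ψ : ℤ/p^{ℓ+1} → ℤ/p`. Since `M` is a system of representatives of the
nonzero residues mod `p`, every `g` with `ψ g ≠ 0` is uniquely `m • s` with `m ∈ M` and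
`ψ s = 1`, because each `m ∈ M` is a unit of `ℤ/p^{ℓ+1}`. The nonzero `g` with `ψ g = 0` form the
image of the additive embedding `x ↦ p x` of `ℤ/p^ℓ`, so by induction they are split by `M` and
`p·S_ℓ`. Counting gives `(p - 1) |S_ℓ| = p^{ℓ+1} - 1`.
-/

open Set Function

section BijOn

variable {α β : Type*} {f : α → β} {s₁ s₂ : Set α} {t₁ t₂ : Set β}

theorem Set.BijOn.union_of_disjoint (h₁ : BijOn f s₁ t₁) (h₂ : BijOn f s₂ t₂)
    (ht : Disjoint t₁ t₂) : BijOn f (s₁ ∪ s₂) (t₁ ∪ t₂) := by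
  have hs : Disjoint s₁ s₂ :=
    disjoint_left.2 fun _ hx₁ hx₂ => disjoint_left.1 ht (h₁.mapsTo hx₁) (h₂.mapsTo hx₂)
  exact h₁.union h₂ <| (injOn_union hs).2 ⟨h₁.injOn, h₂.injOn,
    fun _ hx _ hy => ht.ne_of_mem (h₁.mapsTo hx) (h₂.mapsTo hy)⟩

end BijOn

section Residue

variable {H F : Type*} [CommRing H] [Field F] {M : Set ℤ}

theorem bijOn_zsmul_preimage_one (ψ : H →+* F) [IsLocalHom ψ]
    (hM : BijOn (Int.cast : ℤ → F) M {a | a ≠ 0}) :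
    BijOn (fun p : ℤ × H => p.1 • p.2) (M ×ˢ (ψ ⁻¹' {1})) {h | ψ h ≠ 0} := by
  have hψ_smul : ∀ {m : ℤ} {s : H}, ψ s = 1 → ψ (m • s) = m := fun hs => by
    rw [map_zsmul, hs, zsmul_one]
  have hunit : ∀ {m : ℤ}, m ∈ M → IsUnit (m : H) := fun hm =>
    isUnit_of_map_unit ψ _ (by rw [map_intCast]; exact (hM.mapsTo hm).isUnit)
  refine ⟨?_, ?_, ?_⟩
  · rintro ⟨m, s⟩ ⟨hm, hs⟩
    show ψ (m • s) ≠ 0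
    rw [hψ_smul hs]
    exact hM.mapsTo hm
  · rintro ⟨m₁, s₁⟩ ⟨hm₁, hs₁⟩ ⟨m₂, s₂⟩ ⟨hm₂, hs₂⟩ (h : m₁ • s₁ = m₂ • s₂)
    obtain rfl : m₁ = m₂ := hM.injOn hm₁ hm₂ <| by
      rw [← hψ_smul hs₁, ← hψ_smul hs₂, h]
    rw [zsmul_eq_mul, zsmul_eq_mul] at h
    rw [(hunit hm₁).mul_left_cancel h]
  · intro g (hg : ψ g ≠ 0)
    obtain ⟨m, hm, hmg⟩ := hM.surjOn hg
    obtain ⟨u, hu⟩ := hunit hm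
    refine ⟨(m, ↑u⁻¹ * g), ⟨hm, ?_⟩, ?_⟩
    · show ψ (↑u⁻¹ * g) = 1
      rw [map_mul, ← hmg, ← map_intCast ψ, ← hu, ← map_mul, Units.inv_mul, map_one]
    · show m • (↑u⁻¹ * g) = g
      rw [zsmul_eq_mul, ← hu, ← mul_assoc, Units.mul_inv, one_mul]

end Residue

namespace Splits

variable {G H F : Type*} [AddCommGroup G] [CommRing H] [Field F] {M : Set ℤ} {S : Set G}

theorem bijOn_image (hS : Splits M S) (φ : G →+ H) (hφ : Injective φ) :
    BijOn (fun p : ℤ × H => p.1 • p.2) (M ×ˢ (φ '' S)) (φ '' {g | g ≠ 0}) := by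
  refine ⟨?_, ?_, ?_⟩
  · rintro ⟨m, _⟩ ⟨hm, s, hs, rfl⟩
    exact ⟨m • s, hS.mapsTo (mk_mem_prod hm hs), map_zsmul φ m s⟩
  · rintro ⟨m₁, _⟩ ⟨hm₁, s₁, hs₁, rfl⟩ ⟨m₂, _⟩ ⟨hm₂, s₂, hs₂, rfl⟩ h
    simp only [← map_zsmul] at h
    obtain ⟨rfl, rfl⟩ :=
      Prod.ext_iff.1 (hS.injOn (mk_mem_prod hm₁ hs₁) (mk_mem_prod hm₂ hs₂) (hφ h))
    rfl
  · rintro _ ⟨g, hg, rfl⟩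
    obtain ⟨⟨m, s⟩, ⟨hm, hs⟩, rfl⟩ := hS.surjOn hg
    exact ⟨(m, φ s), ⟨hm, s, hs, rfl⟩, (map_zsmul φ m s).symm⟩

theorem preimage_one (ψ : H →+* F) [IsLocalHom ψ] (hψ : Injective ψ)
    (hM : BijOn (Int.cast : ℤ → F) M {a | a ≠ 0}) : Splits M (ψ ⁻¹' {1}) := by
  simpa only [Splits, ne_eq, map_eq_zero_iff ψ hψ] using bijOn_zsmul_preimage_one ψ hM

theorem image_union_preimage_one {S : Set G} (hS : Splits M S) (φ : G →+ H)
    (hφ : Injective φ) (ψ : H →+* F) [hψ : IsLocalHom ψ] (hker : ∀ h, ψ h = 0 ↔ h ∈ range φ)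
    (hM : BijOn (Int.cast : ℤ → F) M {a | a ≠ 0}) : Splits M (φ '' S ∪ ψ ⁻¹' {1}) := by
  have htarget : {h : H | h ≠ 0} = φ '' {g | g ≠ 0} ∪ {h | ψ h ≠ 0} := by
    ext h
    by_cases hψh : ψ h = 0
    · obtain ⟨g, rfl⟩ := (hker h).1 hψh
      simp [hψh, hφ.eq_iff, map_eq_zero_iff φ hφ]
    · exact iff_of_true (fun h0 => hψh (h0 ▸ map_zero ψ)) (Or.inr hψh)
  rw [Splits, prod_union, htarget]
  refine (hS.bijOn_image φ hφ).union_of_disjoint (bijOn_zsmul_preimage_one ψ hM) ?_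
  refine disjoint_left.2 ?_
  rintro _ ⟨g, -, rfl⟩ (h : ψ (φ g) ≠ 0)
  exact h ((hker _).2 ⟨g, rfl⟩)

end Splits

namespace ZMod

/-- Multiplication by `k`, as an embedding `ℤ/n ↪ ℤ/nk`. -/
def scaleHom (k n : ℕ) : ZMod n →+ ZMod (n * k) :=
  lift n ⟨(k : ZMod (n * k)) • Int.castAddHom (ZMod (n * k)), by
    simp [← Nat.cast_mul, Nat.mul_comm k n]⟩

variable {k n : ℕ} [NeZero n]

theorem scaleHom_apply (x : ZMod n) : scaleHom k n x = ((k * x.val : ℕ) : ZMod (n * k)) := by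
  have hx : x = ((x.val : ℤ) : ZMod n) := by simp
  nth_rw 1 [hx]
  rw [scaleHom, lift_coe]
  simp

theorem val_scaleHom [NeZero k] (x : ZMod n) : (scaleHom k n x).val = k * x.val := by
  rw [scaleHom_apply, val_cast_of_lt]
  rw [mul_comm n]
  exact Nat.mul_lt_mul_of_pos_left x.val_lt (NeZero.pos k)

theorem scaleHom_injective [NeZero k] : Function.Injective (scaleHom k n) := fun x y h =>
  val_injective n <| Nat.eq_of_mul_eq_mul_left (NeZero.pos k) <| by
    rw [← val_scaleHom, ← val_scaleHom, h]

theorem castHom_eq_zero_iff_mem_range_scaleHom [NeZero k] (g : ZMod (n * k)) :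
    castHom (dvd_mul_left k n) (ZMod k) g = 0 ↔ g ∈ Set.range (scaleHom k n) := by
  rw [castHom_apply, cast_eq_val, natCast_eq_zero_iff]
  constructor
  · rintro ⟨t, ht⟩
    have htn : t < n := by
      have := g.val_lt
      rw [ht, mul_comm n] at this
      exact Nat.lt_of_mul_lt_mul_left this
    refine ⟨t, ?_⟩
    rw [scaleHom_apply, val_cast_of_lt htn, ← ht, natCast_zmod_val]
  · rintro ⟨x, rfl⟩
    exact ⟨x.val, val_scaleHom x⟩

end ZMod

instance ZMod.isLocalHom_castHom_pow (p k : ℕ) [NeZero p] :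
    IsLocalHom (ZMod.castHom (dvd_pow_self p k.add_one_ne_zero) (ZMod p)) :=
  ⟨fun a ha => by
    rw [ZMod.castHom_apply, ZMod.cast_eq_val, ZMod.isUnit_iff_coprime] at ha
    rw [← ZMod.natCast_zmod_val a, ZMod.isUnit_iff_coprime]
    exact ha.pow_right _⟩

section SplitterSet

variable {p : ℕ}

theorem ZMod.castHom_pow_one_injective [NeZero p] :
    Injective (ZMod.castHom (dvd_pow_self p (0).add_one_ne_zero) (ZMod p)) := by
  have : CharP (ZMod p) (p ^ (0 + 1)) := by rw [zero_add, pow_one]; infer_instance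
  exact ZMod.castHom_injective (ZMod p)

theorem splitterSet_zero [NeZero p] :
    splitterSet p 0 = ZMod.castHom (dvd_pow_self p (0).add_one_ne_zero) (ZMod p) ⁻¹' {1} := by
  ext x
  rw [mem_preimage, mem_singleton_iff, map_eq_one_iff _ ZMod.castHom_pow_one_injective]
  rfl

theorem splitterSet_succ (hp : 1 < p) (i : ℕ) :
    splitterSet p (i + 1) = ZMod.scaleHom p (p ^ (i + 1)) '' splitterSet p i ∪
      ZMod.castHom (dvd_pow_self p (i + 1).add_one_ne_zero) (ZMod p) ⁻¹' {1} := by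
  have : NeZero p := ⟨by omega⟩
  have himage : (fun x : ZMod (p ^ (i + 1)) => ((p * x.val : ℕ) : ZMod (p ^ (i + 2)))) =
      ZMod.scaleHom p (p ^ (i + 1)) :=
    funext fun x => (ZMod.scaleHom_apply x).symm
  have hres : {s : ZMod (p ^ (i + 2)) | s.val % p = 1} =
      ZMod.castHom (dvd_pow_self p (i + 1).add_one_ne_zero) (ZMod p) ⁻¹' {1} := by
    ext s
    rw [mem_preimage, mem_singleton_iff, ZMod.castHom_apply, ZMod.cast_eq_val,
      ← Nat.cast_one (R := ZMod p), ZMod.natCast_eq_natCast_iff', Nat.mod_eq_of_lt hp]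
    rfl
  rw [splitterSet, himage, hres]
  rfl

end SplitterSet

theorem splits_splitterSet {p : ℕ} [Fact p.Prime] {M : Set ℤ}
    (hM : BijOn (Int.cast : ℤ → ZMod p) M {a | a ≠ 0}) (ℓ : ℕ) : Splits M (splitterSet p ℓ) := by
  induction ℓ with
  | zero =>
    rw [splitterSet_zero]
    exact Splits.preimage_one _ ZMod.castHom_pow_one_injective hM
  | succ i ih =>
    rw [splitterSet_succ (Fact.out : p.Prime).one_lt]
    exact ih.image_union_preimage_one _ ZMod.scaleHom_injective _
      ZMod.castHom_eq_zero_iff_mem_range_scaleHom hM (hψ := ZMod.isLocalHom_castHom_pow p (i + 1))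

theorem bijOn_intCast_Icc_diff_zero {n : ℕ} {a b : ℤ} (ha : 0 ≤ a) (hb : 0 ≤ b)
    (hab : a + b = n - 1) :
    BijOn (Int.cast : ℤ → ZMod n) {m | -a ≤ m ∧ m ≤ b ∧ m ≠ 0} {x | x ≠ 0} := by
  have : NeZero n := ⟨by omega⟩
  have hsmall : ∀ {m : ℤ}, -n < m → m < n → (n : ℤ) ∣ m → m = 0 := fun h₁ h₂ hm =>
    Int.eq_zero_of_abs_lt_dvd hm (abs_lt.2 ⟨h₁, h₂⟩)
  refine ⟨fun m ⟨h₁, h₂, h₀⟩ hm =>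
      h₀ (hsmall (by omega) (by omega) ((ZMod.intCast_zmod_eq_zero_iff_dvd m n).1 hm)),
    fun m₁ ⟨h₁, h₂, _⟩ m₂ ⟨h₁', h₂', _⟩ h => ?_, fun x (hx : x ≠ 0) => ?_⟩
  · have := hsmall (m := m₂ - m₁) (by omega) (by omega)
      ((ZMod.intCast_eq_intCast_iff_dvd_sub _ _ _).1 h)
    omega
  · have hv : 0 < x.val := (ZMod.val_pos).2 hx
    have hvn := x.val_lt
    by_cases hvb : (x.val : ℤ) ≤ b
    · exact ⟨x.val, ⟨by omega, hvb, by omega⟩, by simp⟩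
    · exact ⟨x.val - n, ⟨by omega, by omega, by omega⟩, by simp⟩

theorem card_setOf_ne_zero (G : Type*) [Zero G] [Finite G] :
    Nat.card {g : G | g ≠ 0} = Nat.card G - 1 := by
  rw [← compl_singleton_eq, Nat.card_coe_set_eq, ncard_compl, ncard_singleton]

theorem Splits.card_mul_card {G : Type*} [AddCommGroup G] [Finite G] {M : Set ℤ} {S : Set G}
    (h : Splits M S) : Nat.card M * Nat.card S = Nat.card G - 1 := by
  rw [← Nat.card_prod, ← Nat.card_congr (Equiv.Set.prod M S), Nat.card_congr (h.equiv _),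
    card_setOf_ne_zero]

theorem stmt0 (p : ℕ) (hp : p.Prime) (kp km : ℤ) (h0 : 0 < km) (hlt : km < kp)
    (hsum : kp + km = (p : ℤ) - 1) (ℓ : ℕ) :
    Splits {m : ℤ | -km ≤ m ∧ m ≤ kp ∧ m ≠ 0} (splitterSet p ℓ) ∧
      Nat.card ↥(splitterSet p ℓ) = (p ^ (ℓ + 1) - 1) / (p - 1) := by
  have : Fact p.Prime := ⟨hp⟩
  have hM := bijOn_intCast_Icc_diff_zero (n := p) (a := km) (b := kp) h0.le (by omega) (by omega)
  have hS := splits_splitterSet hM ℓ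
  have hcardM : Nat.card {m : ℤ | -km ≤ m ∧ m ≤ kp ∧ m ≠ 0} = p - 1 := by
    rw [Nat.card_congr hM.equiv, card_setOf_ne_zero, Nat.card_zmod]
  have hcard := hS.card_mul_card
  rw [hcardM, Nat.card_zmod] at hcard
  exact ⟨hS, (Nat.div_eq_of_eq_mul_right (Nat.sub_pos_of_lt hp.one_lt) hcard.symm).symm⟩
end

section
/- Let p be a prime and let k₊, k₋ be integers with 0 < k₋ < k₊ and k₊ + k₋ = p - 1, and set M = [-k₋, k₊]*. Let F be the finite field with p^ℓ elements (ℓ ≥ 1), let α ∈ F be a primitive element (a generator of the multiplicative group F*), and let S = {P(α) : P a monic polynomial over GF(p) of degree at most ℓ - 1}. Then M and S split the additive group of F. -/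
/-!
Since `M ∪ {0}` is an interval of `p` consecutive integers, reduction mod `p` maps `M`
bijectively onto `GF(p)ˣ`, and `m • x = (m mod p) • x` in `F`. As `α` generates `F*`, it
generates `F` as a `GF(p)`-algebra, so `1, α, …, α^(ℓ-1)` is a basis and `P ↦ P(α)` is a
bijection from polynomials of degree `< ℓ` onto `F`. A nonzero such polynomial is uniquely
`c • P` with `c ≠ 0` and `P` monic, `c` being its leading coefficient.
-/

theorem splits_of_bijOn_intCast {K G : Type*} [Ring K] [AddCommGroup G] [Module K G]
    {M : Set ℤ} {S : Set G} (hM : Set.BijOn (Int.cast : ℤ → K) M {c | c ≠ 0})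
    (hS : Set.BijOn (fun q : K × G => q.1 • q.2) ({c | c ≠ 0} ×ˢ S) {g | g ≠ 0}) :
    Splits M S :=
  (hS.comp (hM.prodMap (Set.bijOn_id S))).congr fun q _ => Int.cast_smul_eq_zsmul K q.1 q.2

theorem ZMod.bijOn_intCast_Ico (n : ℕ) [NeZero n] (a : ℤ) :
    Set.BijOn (Int.cast : ℤ → ZMod n) (Set.Ico a (a + n)) Set.univ := by
  have hn : (0 : ℤ) < n := by exact_mod_cast Nat.pos_of_ne_zero (NeZero.ne n)
  have hrepr : ∀ m ∈ Set.Ico a (a + n), (m - a) % n = m - a := fun m hm =>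
    Int.emod_eq_of_lt (by linarith [hm.1]) (by linarith [hm.2])
  refine ⟨Set.mapsTo_univ _ _, fun m hm m' hm' h => ?_, fun x _ => ?_⟩
  · have hcast : ((m - a : ℤ) : ZMod n) = ((m' - a : ℤ) : ZMod n) := by push_cast; rw [h]
    have hmod := (ZMod.intCast_eq_intCast_iff' _ _ n).mp hcast
    rw [hrepr m hm, hrepr m' hm'] at hmod
    omega
  · refine ⟨(x.cast - a) % n + a, ⟨by linarith [Int.emod_nonneg (x.cast - a) hn.ne'],
      by linarith [Int.emod_lt_of_pos (x.cast - a) hn]⟩, ?_⟩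
    simp [ZMod.intCast_mod]

theorem Algebra.adjoin_singleton_eq_top_of_forall_pow {K F : Type*} [CommSemiring K] [Semiring F]
    [Algebra K F] {α : F} (hα : ∀ x : F, x ≠ 0 → ∃ k : ℕ, α ^ k = x) :
    Algebra.adjoin K {α} = ⊤ := by
  refine Algebra.eq_top_iff.mpr fun x => ?_
  rcases eq_or_ne x 0 with rfl | hx
  · exact zero_mem _
  · obtain ⟨k, rfl⟩ := hα x hx
    exact pow_mem (Algebra.self_mem_adjoin_singleton K α) k

namespace Polynomial

theorem Monic.leadingCoeff_smul {K : Type*} [Field K] {P : K[X]} (hP : P.Monic)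
    {c : K} (hc : c ≠ 0) : (c • P).leadingCoeff = c := by
  rw [leadingCoeff_smul_of_smul_regular _ (IsSMulRegular.of_ne_zero hc), hP.leadingCoeff,
    smul_eq_mul, mul_one]

end Polynomial

namespace PowerBasis

open Polynomial

variable {K S : Type*} [Field K] [Ring S] [Algebra K S] (pb : PowerBasis K S)

theorem aeval_gen_injOn : Set.InjOn (aeval pb.gen) {P : K[X] | P.natDegree < pb.dim} := by
  intro P hP Q hQ h
  by_contra hne
  have hroot : aeval pb.gen (P - Q) = 0 := by rw [map_sub, h, sub_self]
  have := pb.dim_le_natDegree_of_root (sub_ne_zero.mpr hne) hroot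
  have := natDegree_sub_le P Q
  simp only [Set.mem_ofPred_eq] at hP hQ
  omega

theorem bijOn_smul_aeval_gen_monic [Nontrivial S] :
    Set.BijOn (fun q : K × S => q.1 • q.2)
      ({c | c ≠ 0} ×ˢ {x | ∃ P : K[X], P.Monic ∧ P.natDegree ≤ pb.dim - 1 ∧ aeval pb.gen P = x})
      {x | x ≠ 0} := by
  have hdim := pb.dim_pos
  have hdeg : ∀ (c : K) {P : K[X]}, P.natDegree ≤ pb.dim - 1 → (c • P).natDegree < pb.dim :=
    fun c P hP => by have := natDegree_smul_le c P; omega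
  refine ⟨?_, ?_, ?_⟩
  · rintro ⟨c, _⟩ ⟨hc, P, hP, hPdeg, rfl⟩ (h : c • aeval pb.gen P = 0)
    rw [← map_smul] at h
    have := pb.aeval_gen_injOn (hdeg c hPdeg) (by simp [hdim]) (h.trans (map_zero _).symm)
    exact smul_ne_zero hc hP.ne_zero this
  · rintro ⟨c, _⟩ ⟨hc, P, hP, hPdeg, rfl⟩ ⟨c', _⟩ ⟨hc', P', hP', hPdeg', rfl⟩ h
    simp only [← map_smul] at h
    have hsmul := pb.aeval_gen_injOn (hdeg c hPdeg) (hdeg c' hPdeg') h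
    have hcc : c = c' := by
      simpa only [hP.leadingCoeff_smul hc, hP'.leadingCoeff_smul hc'] using
        congrArg leadingCoeff hsmul
    subst hcc
    rw [smul_right_injective _ hc hsmul]
  · intro x hx
    obtain ⟨Q, hQdeg, rfl⟩ := pb.exists_eq_aeval x
    have hQ : Q ≠ 0 := by rintro rfl; exact hx (map_zero _)
    have hlc : Q.leadingCoeff ≠ 0 := leadingCoeff_ne_zero.mpr hQ
    have hmonic : (Q.leadingCoeff⁻¹ • Q).Monic := by
      rw [Monic, leadingCoeff_smul_of_smul_regular _ (IsSMulRegular.of_ne_zero (inv_ne_zero hlc)),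
        smul_eq_mul, inv_mul_cancel₀ hlc]
    refine ⟨(Q.leadingCoeff, aeval pb.gen (Q.leadingCoeff⁻¹ • Q)),
      ⟨hlc, _, hmonic, (natDegree_smul_le _ _).trans (by omega), rfl⟩, ?_⟩
    simp only [← map_smul, smul_smul, mul_inv_cancel₀ hlc, one_smul]

end PowerBasis

theorem stmt1_general (p : ℕ) (hp : p.Prime) (kp km : ℤ) (h0 : 0 < km) (hlt : km < kp)
    (hsum : kp + km = (p : ℤ) - 1) (ℓ : ℕ)
    (F : Type*) [Field F] [Fintype F] [Algebra (ZMod p) F]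
    (hF : Fintype.card F = p ^ ℓ)
    (α : F) (hα : ∀ x : F, x ≠ 0 → ∃ k : ℕ, α ^ k = x) :
    Splits {m : ℤ | -km ≤ m ∧ m ≤ kp ∧ m ≠ 0}
      {x : F | ∃ P : Polynomial (ZMod p), P.Monic ∧ P.natDegree ≤ ℓ - 1 ∧
        Polynomial.aeval α P = x} := by
  have : Fact p.Prime := ⟨hp⟩
  have hM : Set.BijOn (Int.cast : ℤ → ZMod p) {m | -km ≤ m ∧ m ≤ kp ∧ m ≠ 0} {c | c ≠ 0} := by
    have h := (ZMod.bijOn_intCast_Ico p (-km)).sdiff_singleton (a := 0) ⟨by omega, by omega⟩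
    convert h using 1 <;> ext m
    · simp only [Set.mem_ofPred_eq, Set.mem_sdiff, Set.mem_Ico, Set.mem_singleton_iff]
      omega
    · simp
  let pb := PowerBasis.ofAdjoinEqTop (IsIntegral.of_finite (ZMod p) α)
    (Algebra.adjoin_singleton_eq_top_of_forall_pow hα)
  have hdim : pb.dim = ℓ := by
    have hcard := Module.card_eq_pow_finrank (K := ZMod p) (V := F)
    rw [pb.finrank, ZMod.card, hF] at hcard
    exact Nat.pow_right_injective hp.two_le hcard.symm
  have hS := pb.bijOn_smul_aeval_gen_monic
  rw [hdim, PowerBasis.ofAdjoinEqTop_gen] at hS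
  exact splits_of_bijOn_intCast hM hS

theorem stmt1 (p : ℕ) (hp : p.Prime) (kp km : ℤ) (h0 : 0 < km) (hlt : km < kp)
    (hsum : kp + km = (p : ℤ) - 1) (ℓ : ℕ) (hℓ : 1 ≤ ℓ)
    (F : Type*) [Field F] [Fintype F] [Algebra (ZMod p) F]
    (hF : Fintype.card F = p ^ ℓ)
    (α : F) (hα : ∀ x : F, x ≠ 0 → ∃ k : ℕ, α ^ k = x) :
    Splits {m : ℤ | -km ≤ m ∧ m ≤ kp ∧ m ≠ 0}
      {x : F | ∃ P : Polynomial (ZMod p), P.Monic ∧ P.natDegree ≤ ℓ - 1 ∧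
        Polynomial.aeval α P = x} :=
  stmt1_general p hp kp km h0 hlt hsum ℓ F hF α hα
end

section
/- For any positive integers a < b and any N ∈ ℕ, there exist positive integers k₊, k₋, n with k₋ < k₊, k₋·b = k₊·a (i.e., the balance ratio k₋/k₊ equals a/b), n > N, and a subgroup Λ ⊆ ℤⁿ that is a lattice tiling of ℤⁿ by (k₊, k₋, n)-quasi-crosses. Consequently, for every rational balance ratio β ∈ (0,1) there are lattice tilings by quasi-crosses of that balance ratio in unboundedly many dimensions. -/
/-!
Take a prime `q ≡ 1 (mod a + b)` (Dirichlet), write `q - 1 = (a + b) t` and set `k₋ = a t`,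
`k₊ = b t`, so that `[-k₋, k₊]` is a complete residue system modulo `q`. Choosing a representative
`s_p` of every point `p` of the projective space `ℙ(𝔽_q^(N+1))`, each nonzero vector of `𝔽_q^(N+1)`
is uniquely `m • s_p` with `m ∈ [-k₋, k₊] \ {0}`. Hence the kernel of `z ↦ ∑ z_p • s_p` is a
lattice tiling of `ℤⁿ` by quasi-crosses, in dimension `n = |ℙ(𝔽_q^(N+1))| > N`
(a Hamming-code construction).
-/

/-- The `(k₊, k₋, n)`-quasi-cross: the zero vector together with all vectors `m • eᵢ`
with `-k₋ ≤ m ≤ k₊`, `m ≠ 0`. -/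
def quasiCross (kp km : ℤ) (n : ℕ) : Set (Fin n → ℤ) :=
  {x | x = 0 ∨ ∃ i : Fin n, ∃ m : ℤ, -km ≤ m ∧ m ≤ kp ∧ m ≠ 0 ∧ x = Pi.single i m}

/-- `Λ` is a lattice tiling of `ℤⁿ` by `(k₊, k₋, n)`-quasi-crosses: every `z ∈ ℤⁿ` has a
unique representation `z = v + e` with `v ∈ Λ` and `e` in the quasi-cross. -/
def IsLatticeTiling {n : ℕ} (Λ : AddSubgroup (Fin n → ℤ)) (kp km : ℤ) : Prop :=
  ∀ z : Fin n → ℤ, ∃! ve : (Fin n → ℤ) × (Fin n → ℤ),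
    ve.1 ∈ Λ ∧ ve.2 ∈ quasiCross kp km n ∧ z = ve.1 + ve.2

open Set
open scoped LinearAlgebra.Projectivization

section Splitting

variable {G : Type*} [AddCommGroup G] {n : ℕ} {kp km : ℤ}

theorem isLatticeTiling_ker_of_bijOn {φ : (Fin n → ℤ) →+ G}
    (h : BijOn φ (quasiCross kp km n) univ) :
    IsLatticeTiling φ.ker kp km := by
  intro z
  obtain ⟨e, he, hez⟩ := h.surjOn (mem_univ (φ z))
  refine ⟨(z - e, e), ⟨by simp [hez], he, by simp⟩, ?_⟩
  rintro ⟨v', e'⟩ ⟨hv', he', rfl⟩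
  have : e' = e := h.injOn he' he (by simpa [(AddMonoidHom.mem_ker).1 hv'] using hez.symm)
  simp [this]

theorem quasiCross_eq_insert_image (kp km : ℤ) (n : ℕ) :
    quasiCross kp km n =
      insert 0 ((fun im : Fin n × ℤ => Pi.single im.1 im.2) '' (univ ×ˢ (Icc (-km) kp \ {0}))) := by
  ext x
  simp only [quasiCross, mem_ofPred_eq, mem_insert_iff, mem_image, mem_prod, mem_univ,
    mem_sdiff, mem_Icc, mem_singleton_iff, true_and, Prod.exists]
  grind

/-- `s` splits `G` with multiplier set `[-k₋, k₊] \ {0}`, in the sense of Hickerson and Stein. -/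
def IsSplitting (s : Fin n → G) (kp km : ℤ) : Prop :=
  BijOn (fun im : Fin n × ℤ => im.2 • s im.1) (univ ×ˢ (Icc (-km) kp \ {0})) {0}ᶜ

theorem IsSplitting.bijOn_quasiCross {s : Fin n → G} (hs : IsSplitting s kp km) :
    BijOn (Fintype.linearCombination ℤ s) (quasiCross kp km n) univ := by
  classical
  have hcomp : BijOn (Fintype.linearCombination ℤ s ∘ fun im : Fin n × ℤ => Pi.single im.1 im.2)
      (univ ×ˢ (Icc (-km) kp \ {0})) {0}ᶜ := by
    simpa [IsSplitting, Function.comp_def, Fintype.linearCombination_apply_single] using hs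
  have himage := (BijOn.mk ((mapsTo_image_iff).2 hcomp.mapsTo) hcomp.injOn.image_of_comp
    (hcomp.surjOn.of_comp (mapsTo_image _ _)))
  have hunion : insert (0 : G) {0}ᶜ = univ := by ext; simp [em]
  rw [quasiCross_eq_insert_image, ← hunion]
  simpa using himage.insert (a := 0) (by simp)

theorem IsSplitting.isLatticeTiling {s : Fin n → G} (hs : IsSplitting s kp km) :
    IsLatticeTiling (Fintype.linearCombination ℤ s).toAddMonoidHom.ker kp km :=
  isLatticeTiling_ker_of_bijOn hs.bijOn_quasiCross

end Splitting

theorem Projectivization.bijOn_smul_rep (K V : Type*) [DivisionRing K] [AddCommGroup V]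
    [Module K V] :
    BijOn (fun pc : ℙ K V × K => pc.2 • pc.1.rep) (univ ×ˢ {0}ᶜ) {0}ᶜ := by
  refine ⟨fun pc ⟨_, hc⟩ => smul_ne_zero hc pc.1.rep_nonzero, ?_, ?_⟩
  · rintro ⟨p, c⟩ ⟨-, hc : c ≠ 0⟩ ⟨p', c'⟩ - (h : c • p.rep = c' • p'.rep)
    have hp : p = p' := by
      rw [← p.mk_rep, ← p'.mk_rep, mk_eq_mk_iff']
      exact ⟨c⁻¹ * c', by rw [mul_smul, ← h, smul_smul, inv_mul_cancel₀ hc, one_smul]⟩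
    subst hp
    exact Prod.ext rfl (smul_left_injective K p.rep_nonzero h)
  · intro v (hv : v ≠ 0)
    obtain ⟨u, hu⟩ := (mk_eq_mk_iff K _ v (mk K v hv).rep_nonzero hv).1 (mk K v hv).mk_rep
    refine ⟨(mk K v hv, (u⁻¹ : Kˣ)), ⟨mem_univ _, (u⁻¹).ne_zero⟩, ?_⟩
    simp [← hu, Units.smul_def, smul_smul]

theorem ZMod.bijOn_intCast_Icc {q : ℕ} {km kp : ℤ} (hsum : km + kp + 1 = q) (hq : q ≠ 0) :
    BijOn (Int.cast : ℤ → ZMod q) (Icc (-km) kp) univ := by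
  refine ⟨mapsTo_univ _ _, fun m hm m' hm' h => ?_, fun c _ => ?_⟩
  · rw [mem_Icc] at hm hm'
    have hdvd := (ZMod.intCast_eq_intCast_iff_dvd_sub m m' q).1 h
    linarith [Int.eq_zero_of_abs_lt_dvd hdvd (abs_sub_lt_iff.2 ⟨by omega, by omega⟩)]
  · obtain ⟨x, rfl⟩ := ZMod.intCast_surjective c
    have hq' : (0 : ℤ) < q := by exact_mod_cast Nat.pos_of_ne_zero hq
    refine ⟨(x + km) % q - km, ⟨?_, ?_⟩, by simp [ZMod.intCast_mod]⟩
    · linarith [Int.emod_nonneg (x + km) hq'.ne']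
    · linarith [Int.emod_lt_of_pos (x + km) hq']

theorem isSplitting_rep {q : ℕ} [Fact q.Prime] {V : Type*} [AddCommGroup V] [Module (ZMod q) V]
    {n : ℕ} (σ : Fin n ≃ ℙ (ZMod q) V) {kp km : ℤ} (hkm : 0 ≤ km) (hkp : 0 ≤ kp)
    (hsum : km + kp + 1 = q) :
    IsSplitting (fun i => (σ i).rep) kp km := by
  have hcast : BijOn (Int.cast : ℤ → ZMod q) (Icc (-km) kp \ {0}) {0}ᶜ := by
    simpa [compl_eq_univ_sdiff] using (ZMod.bijOn_intCast_Icc hsum (Fact.out : q.Prime).ne_zero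
      ).sdiff_singleton (a := 0) ⟨by omega, hkp⟩
  simpa [IsSplitting, Function.comp_def, Int.cast_smul_eq_zsmul] using
    (Projectivization.bijOn_smul_rep _ V).comp (σ.bijective.bijOn_univ.prodMap hcast)

theorem Projectivization.lt_card_fin_fun (K : Type*) [Field K] [Finite K] (N : ℕ) :
    N < Nat.card (ℙ K (Fin (N + 1) → K)) := by
  rw [card_of_finrank K _ (Module.finrank_fin_fun K)]
  calc N < ∑ _ ∈ Finset.range (N + 1), 1 := by simp
    _ ≤ _ := Finset.sum_le_sum fun i _ => Nat.one_le_pow _ _ Nat.card_pos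

theorem exists_isLatticeTiling_of_prime {q : ℕ} (hq : q.Prime) {kp km : ℤ} (hkm : 0 ≤ km)
    (hkp : 0 ≤ kp) (hsum : km + kp + 1 = q) (N : ℕ) :
    ∃ n, N < n ∧ ∃ Λ : AddSubgroup (Fin n → ℤ), IsLatticeTiling Λ kp km := by
  have := Fact.mk hq
  let σ := (Finite.equivFin (ℙ (ZMod q) (Fin (N + 1) → ZMod q))).symm
  exact ⟨_, Projectivization.lt_card_fin_fun (ZMod q) N, _,
    (isSplitting_rep σ hkm hkp hsum).isLatticeTiling⟩

theorem stmt2 (a b : ℕ) (ha : 0 < a) (hab : a < b) (N : ℕ) :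
    ∃ (kp km n : ℕ), 0 < km ∧ km < kp ∧ km * b = kp * a ∧ N < n ∧
      ∃ Λ : AddSubgroup (Fin n → ℤ), IsLatticeTiling Λ (kp : ℤ) (km : ℤ) := by
  obtain ⟨q, hq, hq1, hqmod⟩ := Nat.exists_prime_gt_modEq_one (k := a + b) 1 (by omega)
  obtain ⟨t, ht⟩ : a + b ∣ q - 1 := (Nat.modEq_iff_dvd' hq.one_le).1 hqmod.symm
  have hqt : q = a * t + b * t + 1 := by rw [← add_mul, ← ht]; omega
  have ht0 : 0 < t := Nat.pos_of_ne_zero fun h => by simp [h] at hqt; omega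
  obtain ⟨n, hn, Λ, hΛ⟩ := exists_isLatticeTiling_of_prime hq (kp := (b * t : ℕ))
    (km := (a * t : ℕ)) (Nat.cast_nonneg _) (Nat.cast_nonneg _) (by rw [hqt]; push_cast; ring) N
  exact ⟨b * t, a * t, n, Nat.mul_pos ha ht0, Nat.mul_lt_mul_of_pos_right hab ht0, by ring,
    hn, Λ, hΛ⟩
end

section
/- Let n ≥ 2 and let k₊, k₋ be integers with 0 < k₋ < k₊. If 2k₊(k₋ + 1) - k₋² > n(k₊ + k₋), then there is no subgroup Λ ⊆ ℤⁿ that is a lattice tiling of ℤⁿ by (k₊, k₋, n)-quasi-crosses. -/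
/-!
Embed the L-shaped region `[0,k₊]×[0,k₋] ∪ [0,k₋]×[0,k₊]` of the plane into two coordinates of
`ℤⁿ`. Any difference of two of its points has the form `a eᵢ - b eⱼ` with `a, b ∈ [-k₋, k₊]`, i.e.
it is a difference of two elements of the quasi-cross `E`, so no two of its points are congruent
modulo a tiling lattice. Hence the region, of size `2(k₊+1)(k₋+1) - (k₋+1)²`, has at most `|E|`
points, whereas `|E| = 1 + n(k₊+k₋)` is smaller under the hypothesis.
-/

open Finset
open scoped Pointwise

variable {n : ℕ} {kp km : ℤ}

theorem single_mem_quasiCross (i : Fin n) {m : ℤ} (h₁ : -km ≤ m) (h₂ : m ≤ kp) :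
    Pi.single i m ∈ quasiCross kp km n := by
  by_cases hm : m = 0
  · exact Or.inl (by simp [hm])
  · exact Or.inr ⟨i, m, h₁, h₂, hm, rfl⟩

noncomputable def quasiCrossFinset (kp km : ℤ) (n : ℕ) : Finset (Fin n → ℤ) :=
  insert 0 ((univ ×ˢ (Icc (-km) kp).erase 0).image fun q => Pi.single q.1 q.2)

theorem quasiCross_subset_quasiCrossFinset :
    quasiCross kp km n ⊆ quasiCrossFinset kp km n := by
  rintro x (rfl | ⟨i, m, h₁, h₂, hm, rfl⟩)
  · exact mem_insert_self _ _
  · exact mem_insert_of_mem (mem_image.2 ⟨(i, m), by simp [*], rfl⟩)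

theorem card_quasiCrossFinset_le (hkm : 0 ≤ km) (hkp : 0 ≤ kp) :
    ((quasiCrossFinset kp km n).card : ℤ) ≤ 1 + n * (kp + km) := by
  have hIcc : ((Icc (-km) kp).erase 0).card = (kp + km).toNat := by
    rw [card_erase_of_mem (mem_Icc.2 ⟨by omega, hkp⟩), Int.card_Icc]
    omega
  have hle : (quasiCrossFinset kp km n).card ≤ n * (kp + km).toNat + 1 := by
    refine (card_insert_le _ _).trans (Nat.add_le_add_right (card_image_le.trans ?_) _)
    simp [hIcc]
  have hcast : ((kp + km).toNat : ℤ) = kp + km := Int.toNat_of_nonneg (by omega)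
  zify [hcast] at hle
  linarith

namespace IsLatticeTiling

variable {Λ : AddSubgroup (Fin n → ℤ)}

theorem eq_of_sub_mem (hΛ : IsLatticeTiling Λ kp km) {e e' : Fin n → ℤ}
    (he : e ∈ quasiCross kp km n) (he' : e' ∈ quasiCross kp km n) (h : e - e' ∈ Λ) :
    e = e' :=
  (congrArg Prod.snd <|
    (hΛ e).unique (y₁ := (0, e)) (y₂ := (e - e', e')) ⟨Λ.zero_mem, he, by simp⟩
      ⟨h, he', by simp⟩)

theorem card_le_of_sub_subset (hΛ : IsLatticeTiling Λ kp km) (S : Finset (Fin n → ℤ))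
    (hS : (S : Set (Fin n → ℤ)) - S ⊆ quasiCross kp km n - quasiCross kp km n) :
    S.card ≤ (quasiCrossFinset kp km n).card := by
  choose c hc using fun z => (hΛ z).exists
  refine card_le_card_of_injOn (fun z => (c z).2)
    (fun z _ => quasiCross_subset_quasiCrossFinset (hc z).2.1) fun s hs s' hs' hss' => ?_
  obtain ⟨e, he, e', he', hee'⟩ := Set.mem_sub.1 (hS (Set.sub_mem_sub hs hs'))
  have hdiff : s - s' = (c s).1 - (c s').1 := by
    calc s - s' = ((c s).1 + (c s).2) - ((c s').1 + (c s').2) := by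
          rw [← (hc s).2.2, ← (hc s').2.2]
      _ = (c s).1 - (c s').1 := by rw [show (c s).2 = (c s').2 from hss']; abel
  have hΛdiff : e - e' ∈ Λ := by
    rw [hee', hdiff]
    exact Λ.sub_mem (hc s).1 (hc s').1
  rw [← sub_eq_zero, ← hee', hΛ.eq_of_sub_mem he he' hΛdiff, sub_self]

end IsLatticeTiling

noncomputable def lShape (kp km : ℤ) : Finset (ℤ × ℤ) :=
  Icc 0 kp ×ˢ Icc 0 km ∪ Icc 0 km ×ˢ Icc 0 kp

theorem card_lShape (hkm : 0 ≤ km) (hle : km ≤ kp) :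
    ((lShape kp km).card : ℤ) = 2 * (kp + 1) * (km + 1) - (km + 1) ^ 2 := by
  have hunion := card_union_add_card_inter (Icc 0 kp ×ˢ Icc 0 km) (Icc 0 km ×ˢ Icc 0 kp)
  rw [product_inter_product, inter_eq_right.2 (Icc_subset_Icc_right hle),
    inter_eq_left.2 (Icc_subset_Icc_right hle)] at hunion
  zify at hunion
  simp only [card_product, Nat.cast_mul, Int.card_Icc, sub_zero,
    Int.toNat_of_nonneg (by omega : 0 ≤ kp + 1), Int.toNat_of_nonneg (by omega : 0 ≤ km + 1)]
    at hunion
  rw [lShape]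
  linarith

def planeEmbedding (i j : Fin n) (p : ℤ × ℤ) : Fin n → ℤ :=
  Pi.single i p.1 + Pi.single j p.2

theorem planeEmbedding_injective {i j : Fin n} (hij : i ≠ j) :
    Function.Injective (planeEmbedding i j) := by
  intro p q h
  exact Prod.ext (by simpa [planeEmbedding, hij] using congrFun h i)
    (by simpa [planeEmbedding, hij.symm] using congrFun h j)

theorem image_planeEmbedding_sub_subset (i j : Fin n) (hle : km ≤ kp) :
    planeEmbedding i j '' lShape kp km - planeEmbedding i j '' lShape kp km ⊆
      quasiCross kp km n - quasiCross kp km n := by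
  rintro _ ⟨_, ⟨p, hp, rfl⟩, _, ⟨q, hq, rfl⟩, rfl⟩
  have hdiff : planeEmbedding i j p - planeEmbedding i j q
      = Pi.single i (p.1 - q.1) + Pi.single j (p.2 - q.2) := by
    simp only [planeEmbedding, Pi.single_sub]
    abel
  simp only [lShape, coe_union, coe_product, coe_Icc, Set.mem_union, Set.mem_prod,
    Set.mem_Icc] at hp hq
  rcases (by omega : (-km ≤ p.1 - q.1 ∧ p.1 - q.1 ≤ kp ∧ -km ≤ q.2 - p.2 ∧ q.2 - p.2 ≤ kp) ∨
      (-km ≤ p.2 - q.2 ∧ p.2 - q.2 ≤ kp ∧ -km ≤ q.1 - p.1 ∧ q.1 - p.1 ≤ kp)) with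
    ⟨h₁, h₂, h₃, h₄⟩ | ⟨h₁, h₂, h₃, h₄⟩
  · refine ⟨_, single_mem_quasiCross i h₁ h₂, _, single_mem_quasiCross j h₃ h₄, ?_⟩
    dsimp only
    rw [hdiff, ← neg_sub p.2, Pi.single_neg, sub_neg_eq_add]
  · refine ⟨_, single_mem_quasiCross j h₁ h₂, _, single_mem_quasiCross i h₃ h₄, ?_⟩
    dsimp only
    rw [hdiff, ← neg_sub p.1, Pi.single_neg, sub_neg_eq_add, add_comm]

theorem stmt4 (n : ℕ) (hn : 2 ≤ n) (kp km : ℤ) (h0 : 0 < km) (hlt : km < kp)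
    (h : 2 * kp * (km + 1) - km ^ 2 > n * (kp + km)) :
    ¬ ∃ Λ : AddSubgroup (Fin n → ℤ), IsLatticeTiling Λ kp km := by
  rintro ⟨Λ, hΛ⟩
  have hij : (⟨0, by omega⟩ : Fin n) ≠ ⟨1, hn⟩ := by simp
  have hpacking := hΛ.card_le_of_sub_subset
    ((lShape kp km).map ⟨planeEmbedding _ _, planeEmbedding_injective hij⟩)
    (by rw [coe_map]; exact image_planeEmbedding_sub_subset _ _ hlt.le)
  rw [card_map] at hpacking
  have hregion := card_lShape h0.le hlt.le
  have hcross := card_quasiCrossFinset_le (n := n) (kp := kp) h0.le (by omega)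
  zify at hpacking
  linarith
end

section
/- Let k₊, k₋ be integers with 0 < k₋ < k₊, let M = [-k₋, k₊]*, and suppose M and some finite set S split a finite additive abelian group G with |G| > 1. Assume the splitting is purely singular, i.e., for every prime p dividing |G| there exists m ∈ M with p | m. Then for every prime p dividing |G|, the number δ_p(M) of elements of M divisible by p satisfies p² · δ_p(M) ≥ |M| = k₊ + k₋. -/
theorem Int.natCard_punctured_Icc {c d : ℤ} (hc : 0 ≤ c) (hd : 0 ≤ d) :
    (Nat.card {t : ℤ | -c ≤ t ∧ t ≤ d ∧ t ≠ 0} : ℤ) = c + d := by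
  have hset : {t : ℤ | -c ≤ t ∧ t ≤ d ∧ t ≠ 0} = ↑((Finset.Icc (-c) d).erase 0) := by
    ext t; simp only [Set.mem_ofPred_eq, Finset.coe_erase, Finset.coe_Icc, Set.mem_sdiff,
      Set.mem_Icc, Set.mem_singleton_iff]; tauto
  have hzero : (0 : ℤ) ∈ Finset.Icc (-c) d := Finset.mem_Icc.2 ⟨by omega, hd⟩
  have hcard := Int.card_Icc_of_le (a := -c) (b := d) (by omega)
  rw [hset, Nat.card_coe_set_eq, Set.ncard_coe_finset, Finset.card_erase_of_mem hzero]
  omega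

theorem Int.setOf_dvd_punctured_Icc_eq_image {p : ℤ} (hp : 0 < p) (a b : ℤ) :
    {m : ℤ | (-b ≤ m ∧ m ≤ a ∧ m ≠ 0) ∧ p ∣ m} =
      (p * ·) '' {t : ℤ | -(b / p) ≤ t ∧ t ≤ a / p ∧ t ≠ 0} := by
  ext m
  constructor
  · rintro ⟨⟨hbm, hma, hm0⟩, t, rfl⟩
    refine ⟨t, ⟨?_, ?_, ?_⟩, rfl⟩
    · rw [neg_le, Int.le_ediv_iff_mul_le hp]; linarith
    · rw [Int.le_ediv_iff_mul_le hp]; linarith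
    · rintro rfl; simp at hm0
  · rintro ⟨t, ⟨hbt, hta, ht0⟩, rfl⟩
    rw [neg_le, Int.le_ediv_iff_mul_le hp] at hbt
    rw [Int.le_ediv_iff_mul_le hp] at hta
    exact ⟨⟨by linarith, by linarith, mul_ne_zero hp.ne' ht0⟩, dvd_mul_right p t⟩

theorem Int.natCard_setOf_dvd_punctured_Icc {p a b : ℤ} (hp : 0 < p) (ha : 0 ≤ a) (hb : 0 ≤ b) :
    (Nat.card {m : ℤ | (-b ≤ m ∧ m ≤ a ∧ m ≠ 0) ∧ p ∣ m} : ℤ) = a / p + b / p := by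
  rw [Int.setOf_dvd_punctured_Icc_eq_image hp,
    Nat.card_image_of_injective (mul_right_injective₀ hp.ne'),
    Int.natCard_punctured_Icc (Int.ediv_nonneg hb hp.le) (Int.ediv_nonneg ha hp.le), add_comm]

theorem Int.add_le_sq_mul_ediv_add_ediv {p a b : ℤ} (hp : 2 ≤ p) (hpa : p ≤ a) (hb : 0 ≤ b) :
    a + b ≤ p ^ 2 * (a / p + b / p) := by
  have hqa : 1 ≤ a / p := by rw [Int.le_ediv_iff_mul_le (by omega)]; linarith
  have hqb : 0 ≤ b / p := Int.ediv_nonneg hb (by omega)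
  have hra := Int.lt_mul_ediv_self_add (x := a) (by omega : 0 < p)
  have hrb := Int.lt_mul_ediv_self_add (x := b) (by omega : 0 < p)
  nlinarith

theorem Int.le_of_dvd_of_mem_punctured_Icc {p a b m : ℤ} (hba : b ≤ a)
    (hm : -b ≤ m ∧ m ≤ a ∧ m ≠ 0) (hpm : p ∣ m) : p ≤ a := by
  obtain ⟨hbm, hma, hm0⟩ := hm
  have := Int.le_of_dvd (abs_pos.2 hm0) ((dvd_abs p m).2 hpm)
  rcases abs_cases m with ⟨h, _⟩ | ⟨h, _⟩ <;> omega

theorem stmt8_general {G : Type*} [Fintype G]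
    (kp km : ℤ) (h0 : 0 < km) (hlt : km < kp)
    (hps : ∀ p : ℕ, p.Prime → p ∣ Fintype.card G →
      ∃ m ∈ {m : ℤ | -km ≤ m ∧ m ≤ kp ∧ m ≠ 0}, (p : ℤ) ∣ m)
    (p : ℕ) (hp : p.Prime) (hpG : p ∣ Fintype.card G) :
    kp + km ≤ (p : ℤ) ^ 2 *
      Nat.card {m : ℤ | (-km ≤ m ∧ m ≤ kp ∧ m ≠ 0) ∧ (p : ℤ) ∣ m} := by
  obtain ⟨m, hm, hpm⟩ := hps p hp hpG
  have hpk : (p : ℤ) ≤ kp := Int.le_of_dvd_of_mem_punctured_Icc hlt.le hm hpm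
  rw [Int.natCard_setOf_dvd_punctured_Icc (by exact_mod_cast hp.pos) (by omega) h0.le]
  exact Int.add_le_sq_mul_ediv_add_ediv (by exact_mod_cast hp.two_le) hpk h0.le

theorem stmt8 {G : Type*} [AddCommGroup G] [Fintype G] (hG : 1 < Fintype.card G)
    (kp km : ℤ) (h0 : 0 < km) (hlt : km < kp)
    (S : Set G) (hSfin : S.Finite)
    (hsplit : Splits {m : ℤ | -km ≤ m ∧ m ≤ kp ∧ m ≠ 0} S)
    (hps : ∀ p : ℕ, p.Prime → p ∣ Fintype.card G →
      ∃ m ∈ {m : ℤ | -km ≤ m ∧ m ≤ kp ∧ m ≠ 0}, (p : ℤ) ∣ m)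
    (p : ℕ) (hp : p.Prime) (hpG : p ∣ Fintype.card G) :
    kp + km ≤ (p : ℤ) ^ 2 *
      Nat.card {m : ℤ | (-km ≤ m ∧ m ≤ kp ∧ m ≠ 0) ∧ (p : ℤ) ∣ m} :=
  stmt8_general kp km h0 hlt hps p hp hpG
end

section
/- Let k ≥ 2 be an integer and let M = [-(k-1), k]* = {m ∈ ℤ : -(k-1) ≤ m ≤ k, m ≠ 0}. If M and some finite set S split a finite additive abelian group G with |G| > 1, then gcd(k, |G|) ≠ 1. -/
/-!
If `gcd(k, |G|) = 1`, multiplication by `k` is injective on `G`. Writing `-(k • s) = m • s'`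
with `m ∈ M`, either `m = k`, and injectivity gives `s' = -s`, or `-m ∈ M` with
`(-m) • s' = k • s`, contradicting unique representation. So `S = -S`; but then
`1 • s = (-1) • (-s)` represents the same nonzero element twice.
-/

namespace Splits

variable {G : Type*} [AddCommGroup G] {M : Set ℤ} {S : Set G}

theorem nonempty [Nontrivial G] (h : Splits M S) : S.Nonempty := by
  obtain ⟨g, hg⟩ := exists_ne (0 : G)
  obtain ⟨⟨_, s⟩, ⟨_, hs⟩, _⟩ := h.surjOn hg
  exact ⟨s, hs⟩

theorem neg_notMem (h : Splits M S) {m : ℤ} (hm : m ∈ M) (hm' : -m ∈ M) (hm0 : m ≠ 0)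
    {s : G} (hs : s ∈ S) : -s ∉ S := fun hs' => by
  have hpair := h.injOn (Set.mk_mem_prod hm hs) (Set.mk_mem_prod hm' hs')
    (show m • s = -m • -s by rw [neg_smul_neg])
  exact hm0 (CharZero.eq_neg_self_iff.mp (congrArg Prod.fst hpair))

theorem neg_mem_of_injective_zsmul (h : Splits M S) {k : ℤ} (hk : k ∈ M)
    (hinj : Function.Injective (k • · : G → G)) (hM : ∀ m ∈ M, m ≠ k → -m ∈ M ∧ -m ≠ k)
    {s : G} (hs : s ∈ S) : -s ∈ S := by
  have hks : -(k • s) ≠ 0 := neg_ne_zero.mpr (h.mapsTo (Set.mk_mem_prod hk hs))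
  obtain ⟨⟨m, s'⟩, ⟨hm, hs'⟩, hrep⟩ := h.surjOn hks
  dsimp only at hrep
  by_cases hmk : m = k
  · subst hmk
    rwa [← hinj (hrep.trans (smul_neg m s).symm)]
  · obtain ⟨hnegm, hnegmk⟩ := hM m hm hmk
    have hpair := h.injOn (Set.mk_mem_prod hnegm hs') (Set.mk_mem_prod hk hs)
      (show -m • s' = k • s by rw [neg_smul, hrep, neg_neg])
    exact absurd (congrArg Prod.fst hpair) hnegmk

end Splits

theorem stmt10_general {G : Type*} [AddCommGroup G] [Fintype G] (hG : 1 < Fintype.card G)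
    (k : ℕ) (hk : 2 ≤ k) (S : Set G)
    (hsplit : Splits {m : ℤ | -((k : ℤ) - 1) ≤ m ∧ m ≤ k ∧ m ≠ 0} S) :
    Nat.gcd k (Fintype.card G) ≠ 1 := by
  intro hcop
  have : Nontrivial G := Fintype.one_lt_card_iff_nontrivial.mp hG
  have hinj : Function.Injective ((k : ℤ) • · : G → G) := by
    simpa only [natCast_zsmul] using (Nat.Coprime.nsmul_right_bijective
      (G := G) (by rwa [Nat.card_eq_fintype_card, Nat.coprime_comm])).injective
  obtain ⟨s, hs⟩ := hsplit.nonempty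
  have hneg : -s ∈ S := hsplit.neg_mem_of_injective_zsmul (k := k) ⟨by omega, le_rfl, by omega⟩
    hinj (fun m ⟨_, _, _⟩ _ => ⟨⟨by omega, by omega, by omega⟩, by omega⟩) hs
  exact hsplit.neg_notMem (m := 1) ⟨by omega, by omega, one_ne_zero⟩
    ⟨by omega, by omega, by omega⟩ one_ne_zero hs hneg

theorem stmt10 {G : Type*} [AddCommGroup G] [Fintype G] (hG : 1 < Fintype.card G)
    (k : ℕ) (hk : 2 ≤ k) (S : Set G) (hSfin : S.Finite)
    (hsplit : Splits {m : ℤ | -((k : ℤ) - 1) ≤ m ∧ m ≤ k ∧ m ≠ 0} S) :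
    Nat.gcd k (Fintype.card G) ≠ 1 :=
  stmt10_general hG k hk S hsplit
end

section
/- Let w ≥ 1 and q > 1 be integers and let M = [-(2^w - 1), 2^w]* = {m ∈ ℤ : -(2^w - 1) ≤ m ≤ 2^w, m ≠ 0}. If there exists a set S ⊆ ℤ/qℤ such that M and S split ℤ/qℤ, then q = 2^{r(w+1)} for some integer r ≥ 1. -/
/-!
Write `q = 2 ^ a * b` with `b` odd and let `t k` be the number of `s ∈ S` with `2 ^ k ∣ s`.
A multiplier of `2`-adic valuation `i` maps `s` into the subgroup `2 ^ e • ℤ/qℤ` (`e ≤ a`) iff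
`2 ^ (e - i) ∣ s`, and `M` contains `2 ^ (w - i)` multipliers of valuation `i ≤ w`; counting the
representations of the nonzero elements of that subgroup gives
`q / 2 ^ e = 1 + ∑ i ≤ w, 2 ^ (w - i) * t (e - i)`. Comparing consecutive `e`, the sequence
`u = (2 ^ (w + 1) - 1) * t + 1` satisfies `u (e - (w + 1)) = 2 ^ (w + 1) * u e` and `u 0 = q`, so
`2 ^ ((w + 1) * ⌈a / (w + 1)⌉)` divides `q`. Hence `w + 1 ∣ a`, `q = 2 ^ a * u a` and
`t (a - w) = t a`.

Since `-2 ^ w ∉ M`, the element `-(2 ^ w • s)` can only be represented as `2 ^ w • s'`, so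
`s + s'` is killed by `2 ^ w`, and it is nonzero because `1, -1 ∈ M`. For `s` in the odd part
`2 ^ a • ℤ/qℤ`, the equality `t (a - w) = t a` puts `s'` there as well, and then `s + s'` is a
nonzero element of odd order killed by `2 ^ w`. So `t a = 0`, `u a = 1` and `q = 2 ^ a`.
-/

open Finset

noncomputable def multiplierSet (w : ℕ) : Finset ℤ := (Icc (-(2 ^ w - 1)) (2 ^ w)).erase 0

@[simp]
theorem mem_multiplierSet {w : ℕ} {m : ℤ} :
    m ∈ multiplierSet w ↔ m ≠ 0 ∧ -(2 ^ w - 1) ≤ m ∧ m ≤ 2 ^ w := by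
  rw [multiplierSet, mem_erase, mem_Icc]

theorem coe_multiplierSet (w : ℕ) :
    (multiplierSet w : Set ℤ) = {m : ℤ | -((2 : ℤ) ^ w - 1) ≤ m ∧ m ≤ 2 ^ w ∧ m ≠ 0} := by
  ext m
  simp only [mem_coe, mem_multiplierSet, Set.mem_ofPred_eq]
  tauto

theorem multiplierSet_succ (w : ℕ) :
    multiplierSet (w + 1) =
      (multiplierSet w).image (2 * ·) ∪ (Icc (-(2 ^ w - 1)) (2 ^ w)).image (2 * · - 1) := by
  ext m
  simp only [mem_union, mem_image, mem_multiplierSet, mem_Icc, pow_succ]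
  constructor
  · rintro ⟨hm0, hlo, hhi⟩
    rcases Int.even_or_odd' m with ⟨c, rfl | rfl⟩
    · exact Or.inl ⟨c, ⟨by omega, by omega, by omega⟩, rfl⟩
    · exact Or.inr ⟨c + 1, ⟨by omega, by omega⟩, by ring⟩
  · rintro (⟨c, ⟨hc0, hlo, hhi⟩, rfl⟩ | ⟨c, ⟨hlo, hhi⟩, rfl⟩) <;> omega

theorem card_Icc_neg_two_pow (w : ℕ) : #(Icc (-(2 ^ w - 1) : ℤ) (2 ^ w)) = 2 ^ (w + 1) := by
  have : (1 : ℤ) ≤ 2 ^ w := one_le_pow₀ (by norm_num)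
  rw [Int.card_Icc, ← Int.toNat_natCast (2 ^ (w + 1))]
  push_cast
  congr 1
  ring

theorem sum_multiplierSet_eq {β : Type*} [AddCommMonoid β] (w : ℕ) {F : ℤ → β} {g : ℕ → β}
    (hF : ∀ i u, Odd u → F (2 ^ i * u) = g i) :
    ∑ m ∈ multiplierSet w, F m = ∑ i ∈ range (w + 1), 2 ^ (w - i) • g i := by
  induction w generalizing F g with
  | zero =>
    have : multiplierSet 0 = {1} := by decide
    simpa [this] using hF 0 1 odd_one
  | succ w ih =>
    have hdisj : Disjoint ((multiplierSet w).image (2 * ·))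
        ((Icc (-(2 ^ w - 1)) (2 ^ w)).image (2 * · - 1)) := by
      simp only [disjoint_left, mem_image]
      rintro _ ⟨c, -, rfl⟩ ⟨d, -, h⟩
      omega
    have hodd : ∀ c ∈ Icc (-(2 ^ w - 1) : ℤ) (2 ^ w), F (2 * c - 1) = g 0 := fun c _ => by
      simpa using hF 0 (2 * c - 1) ⟨c - 1, by ring⟩
    have heven : ∑ c ∈ multiplierSet w, F (2 * c) = ∑ i ∈ range (w + 1), 2 ^ (w - i) • g (i + 1) :=
      ih fun i u hu => by rw [← mul_assoc, ← pow_succ', hF (i + 1) u hu]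
    rw [multiplierSet_succ, sum_union hdisj, sum_image (by intro _ _ _ _ h; simpa using h),
      sum_image (by intro _ _ _ _ h; simpa using h), heven, sum_congr rfl hodd, sum_const,
      card_Icc_neg_two_pow, sum_range_succ' _ (w + 1)]
    simp

section Splits

variable {G : Type*} [AddCommGroup G]

theorem Splits.sum_card_filter_smul_mem [DecidableEq G] {M : Finset ℤ} {S : Finset G}
    (h : Splits (M : Set ℤ) (S : Set G)) (T : Finset G) :
    ∑ m ∈ M, #{s ∈ S | m • s ∈ T} = #(T.erase 0) := by
  rw [← card_sigma]
  refine card_nbij (fun p => p.1 • p.2) ?_ ?_ ?_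
  · rintro ⟨m, s⟩ hp
    simp only [coe_sigma, Set.mem_sigma_iff, mem_coe, mem_filter] at hp
    exact mem_erase.mpr ⟨h.mapsTo (Set.mk_mem_prod hp.1 hp.2.1), hp.2.2⟩
  · rintro ⟨m, s⟩ hp ⟨m', s'⟩ hp' heq
    simp only [coe_sigma, Set.mem_sigma_iff, mem_coe, mem_filter] at hp hp'
    have := h.injOn (Set.mk_mem_prod hp.1 hp.2.1) (Set.mk_mem_prod hp'.1 hp'.2.1) heq
    simp only [Prod.mk.injEq] at this
    obtain ⟨rfl, rfl⟩ := this
    rfl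
  · intro g hg
    obtain ⟨hg0, hgT⟩ := mem_erase.mp hg
    obtain ⟨⟨m, s⟩, ⟨hm, hs⟩, rfl⟩ := h.surjOn hg0
    exact ⟨⟨m, s⟩, by simpa using ⟨hm, hs, hgT⟩, rfl⟩

theorem Splits.exists_two_pow_smul_eq_neg {w : ℕ} {S : Set G}
    (h : Splits (multiplierSet w : Set ℤ) S) {s : G} (hs : s ∈ S) :
    ∃ s' ∈ S, (2 : ℤ) ^ w • s' = -((2 : ℤ) ^ w • s) := by
  have htop : (2 : ℤ) ^ w ∈ multiplierSet w := by
    have : (0 : ℤ) < 2 ^ w := by positivity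
    simp only [mem_multiplierSet]
    omega
  have hne : -((2 : ℤ) ^ w • s) ≠ 0 := neg_ne_zero.mpr (h.mapsTo (Set.mk_mem_prod htop hs))
  obtain ⟨⟨m, s'⟩, ⟨hm, hs'⟩, hms'⟩ := h.surjOn hne
  simp only at hms'
  refine ⟨s', hs', ?_⟩
  by_cases hmtop : m = 2 ^ w
  · exact hmtop ▸ hms'
  -- otherwise `(-m, s')` would be a second representation of `2 ^ w • s`
  have hneg : -m ∈ multiplierSet w := by
    simp only [mem_coe, mem_multiplierSet] at hm ⊢
    omega
  have := h.injOn (Set.mk_mem_prod hneg hs') (Set.mk_mem_prod htop hs)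
    (by simp only [neg_smul, hms', neg_neg])
  simp only [Prod.mk.injEq, neg_eq_iff_eq_neg] at this
  simp only [mem_coe, mem_multiplierSet, this.1] at hm
  omega

theorem Splits.add_ne_zero {w : ℕ} (hw : 1 ≤ w) {S : Set G}
    (h : Splits (multiplierSet w : Set ℤ) S) {s s' : G} (hs : s ∈ S) (hs' : s' ∈ S) :
    s + s' ≠ 0 := by
  have h2 : (2 : ℤ) ≤ 2 ^ w := le_self_pow₀ (by norm_num) (by omega)
  have hmem : ∀ m : ℤ, m = 1 ∨ m = -1 → m ∈ multiplierSet w := by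
    rintro m (rfl | rfl) <;> simp only [mem_multiplierSet] <;> omega
  intro hzero
  have := h.injOn (Set.mk_mem_prod (hmem 1 (by simp)) hs')
    (Set.mk_mem_prod (hmem (-1) (by simp)) hs)
    (by simp only [one_smul, neg_smul]; exact eq_neg_of_add_eq_zero_right hzero)
  simp only [Prod.mk.injEq] at this
  omega

end Splits

theorem Int.two_pow_dvd_two_pow_mul_odd_mul_iff {e i : ℕ} {u : ℤ} (hu : Odd u) (X : ℤ) :
    2 ^ e ∣ 2 ^ i * u * X ↔ 2 ^ (e - i) ∣ X := by
  have hcop : IsCoprime ((2 : ℤ) ^ e) u := by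
    refine IsCoprime.pow_left ?_
    obtain ⟨k, rfl⟩ := hu
    exact ⟨-k, 1, by ring⟩
  rw [mul_comm _ u, mul_assoc]
  refine (Iff.intro hcop.dvd_of_dvd_mul_left (Dvd.dvd.mul_left · u)).trans ?_
  rcases le_or_gt e i with hei | hei
  · simp only [Nat.sub_eq_zero_of_le hei, one_dvd, iff_true, pow_zero]
    exact (pow_dvd_pow 2 hei).mul_right X
  · rw [← Nat.add_sub_cancel' hei.le, pow_add, Nat.add_sub_cancel_left,
      mul_dvd_mul_iff_left (by positivity)]

theorem Nat.dvd_of_ordProj_dvd_of_dvd_pow_mul {p q w X : ℕ} (hp : p.Prime) (hq : q ≠ 0)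
    (hX : p ^ q.factorization p ∣ X) (h : q ∣ p ^ w * X) : q ∣ X := by
  have hcop := Nat.coprime_ordCompl hp hq
  rw [← Nat.ordProj_mul_ordCompl_eq_self q p] at h ⊢
  exact (hcop.pow_left _).mul_dvd_of_dvd_of_dvd hX
    ((hcop.symm.pow_right w).dvd_of_dvd_mul_left ((dvd_mul_left _ _).trans h))

namespace ZMod

variable {q : ℕ} [NeZero q]

theorem dvd_val_intCast_iff {d : ℕ} (hd : d ∣ q) (z : ℤ) :
    d ∣ (z : ZMod q).val ↔ (d : ℤ) ∣ z := by
  rw [← Int.natCast_dvd_natCast, val_intCast,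
    EuclideanDomain.dvd_mod_iff (Int.natCast_dvd_natCast.mpr hd)]

theorem zsmul_eq_intCast_mul_val (c : ℤ) (x : ZMod q) : c • x = ((c * x.val : ℤ) : ZMod q) := by
  rw [zsmul_eq_mul]
  push_cast
  rw [natCast_zmod_val]

theorem dvd_val_add_iff {d : ℕ} (hd : d ∣ q) {x : ZMod q} (hx : d ∣ x.val) (y : ZMod q) :
    d ∣ (x + y).val ↔ d ∣ y.val := by
  rw [val_add, Nat.dvd_mod_iff hd, Nat.dvd_add_right hx]

theorem card_filter_dvd_val {d : ℕ} (hd : d ∣ q) : #{x : ZMod q | d ∣ x.val} = q / d := by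
  have hd0 : 0 < d := Nat.pos_of_dvd_of_pos hd (Nat.pos_of_ne_zero (NeZero.ne q))
  rw [← card_range (q / d)]
  refine card_nbij' (fun x => x.val / d) (fun k => ((d * k : ℕ) : ZMod q)) ?_ ?_ ?_ ?_
  · intro x _
    simpa using Nat.div_lt_div_of_lt_of_dvd hd (val_lt x)
  · intro k _
    simp only [coe_filter, mem_univ, true_and, Set.mem_ofPred_eq]
    rw [val_natCast, Nat.dvd_mod_iff hd]
    exact dvd_mul_right d k
  · intro x hx
    simp only [coe_filter, mem_univ, true_and, Set.mem_ofPred_eq] at hx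
    simp [Nat.mul_div_cancel' hx]
  · intro k hk
    simp only [coe_range, Set.mem_Iio] at hk
    have : d * k < q := by
      calc d * k < d * (q / d) := by gcongr
        _ = q := Nat.mul_div_cancel' hd
    change (((d * k : ℕ) : ZMod q)).val / d = k
    rw [val_natCast, Nat.mod_eq_of_lt this, Nat.mul_div_cancel_left k hd0]

theorem two_pow_dvd_val_zsmul_iff {e : ℕ} (he : 2 ^ e ∣ q) (i : ℕ) {u : ℤ}
    (hu : Odd u) (x : ZMod q) : 2 ^ e ∣ ((2 ^ i * u) • x).val ↔ 2 ^ (e - i) ∣ x.val := by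
  rw [zsmul_eq_intCast_mul_val, dvd_val_intCast_iff he, ← Int.natCast_dvd_natCast (n := x.val)]
  push_cast
  exact Int.two_pow_dvd_two_pow_mul_odd_mul_iff hu _

theorem zsmul_eq_zero_iff_dvd (c : ℤ) (x : ZMod q) : c • x = 0 ↔ (q : ℤ) ∣ c * x.val := by
  rw [zsmul_eq_intCast_mul_val, intCast_zmod_eq_zero_iff_dvd]

theorem two_pow_sub_dvd_val_of_zsmul_eq_zero {a w : ℕ} (ha : 2 ^ a ∣ q) {x : ZMod q}
    (hx : (2 : ℤ) ^ w • x = 0) : 2 ^ (a - w) ∣ x.val := by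
  rw [zsmul_eq_zero_iff_dvd] at hx
  have := (Int.natCast_dvd_natCast.mpr ha).trans hx
  push_cast at this
  rw [← Int.natCast_dvd_natCast]
  push_cast
  rwa [← Int.two_pow_dvd_two_pow_mul_odd_mul_iff (e := a) (i := w) odd_one, mul_one]

theorem eq_zero_of_two_pow_factorization_dvd_val {w : ℕ} {x : ZMod q}
    (hx : 2 ^ q.factorization 2 ∣ x.val) (hw : (2 : ℤ) ^ w • x = 0) : x = 0 := by
  rw [zsmul_eq_zero_iff_dvd] at hw
  have hqx := Nat.dvd_of_ordProj_dvd_of_dvd_pow_mul Nat.prime_two (NeZero.ne q) hx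
    (by exact_mod_cast hw)
  rwa [← natCast_zmod_val x, natCast_eq_zero_iff]

end ZMod

theorem sum_range_two_pow_sub (w : ℕ) : ∑ i ∈ range (w + 1), 2 ^ (w - i) = 2 ^ (w + 1) - 1 := by
  have := sum_range_reflect (2 ^ ·) (w + 1)
  rw [Nat.add_sub_cancel] at this
  rw [this, Nat.geomSum_eq le_rfl]
  simp

theorem sum_range_two_pow_sub_mul_pred (w e : ℕ) (t : ℕ → ℕ) :
    ∑ i ∈ range (w + 1), 2 ^ (w - i) * t (e - 1 - i) + 2 ^ (w + 1) * t e =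
      2 * ∑ i ∈ range (w + 1), 2 ^ (w - i) * t (e - i) + t (e - 1 - w) := by
  have hshift : ∀ i ∈ range w,
      2 ^ (w - i) * t (e - 1 - i) = 2 * (2 ^ (w - (i + 1)) * t (e - (i + 1))) := by
    intro i hi
    rw [mem_range] at hi
    rw [← mul_assoc, ← pow_succ', Nat.sub_sub, Nat.add_comm 1 i]
    congr 3
    omega
  rw [sum_range_succ, sum_range_succ' _ w, sum_congr rfl hshift, ← mul_sum, mul_add]
  simp only [Nat.sub_self, pow_zero, one_mul, Nat.sub_zero, pow_succ]
  ring

theorem two_pow_mul_eq_of_recurrence {w a : ℕ} {u : ℕ → ℕ}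
    (hu : ∀ e, 1 ≤ e → e ≤ a → u (e - (w + 1)) = 2 ^ (w + 1) * u e) {e : ℕ} (he : e ≤ a) :
    2 ^ ((w + 1) * ((e + w) / (w + 1))) * u e = u 0 := by
  induction e using Nat.strong_induction_on with
  | _ e ih =>
    rcases Nat.eq_zero_or_pos e with rfl | he0
    · simp [Nat.div_eq_of_lt]
    have hceil : (e + w) / (w + 1) = (e - (w + 1) + w) / (w + 1) + 1 := by
      rw [show e + w = e - 1 + (w + 1) by omega, Nat.add_div_right _ w.succ_pos]
      rcases le_or_gt (w + 1) e with h | h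
      · congr 2; omega
      · rw [Nat.div_eq_of_lt (show e - 1 < w + 1 by omega), Nat.div_eq_of_lt (by omega)]
    rw [hceil, mul_add, mul_one, pow_add, mul_assoc, ← hu e he0 he]
    exact ih _ (by omega) (by omega)

theorem exists_eq_mul_of_recurrence {w a : ℕ} {u : ℕ → ℕ}
    (hu : ∀ e, 1 ≤ e → e ≤ a → u (e - (w + 1)) = 2 ^ (w + 1) * u e)
    (ha : ∀ k, 2 ^ k ∣ u 0 → k ≤ a) :
    ∃ r, a = r * (w + 1) ∧ 2 ^ a * u a = u 0 ∧ u (a - w) = u a := by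
  have h2 := two_pow_mul_eq_of_recurrence hu le_rfl
  have h1 := two_pow_mul_eq_of_recurrence hu (Nat.sub_le a w)
  obtain ⟨r, hr⟩ : ∃ r, (a + w) / (w + 1) = r := ⟨_, rfl⟩
  rw [hr] at h2
  -- `r` is the ceiling of `a / (w + 1)`, and `2 ^ ((w + 1) * r)` divides `u 0`
  have hra : (w + 1) * r = a := by
    have := ha _ (Dvd.intro _ h2)
    have := hr ▸ Nat.div_add_mod (a + w) (w + 1)
    have := Nat.mod_lt (a + w) (show 0 < w + 1 by omega)
    omega
  have hr' : (a - w + w) / (w + 1) = r := by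
    rcases Nat.eq_zero_or_pos r with rfl | hr0
    · obtain rfl : a = 0 := by simpa using hra.symm
      simp [Nat.div_eq_of_lt]
    · rw [Nat.sub_add_cancel (by nlinarith), ← hra, Nat.mul_div_cancel_left _ w.succ_pos]
  rw [hr', hra] at h1
  rw [hra] at h2
  exact ⟨r, by rw [← hra, mul_comm], h2,
    Nat.eq_of_mul_eq_mul_left (by positivity) (h1.trans h2.symm)⟩

def countTwoPowDvd {q : ℕ} (S : Finset (ZMod q)) (k : ℕ) : ℕ := #{s ∈ S | 2 ^ k ∣ s.val}

namespace Splits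

variable {q w : ℕ} [NeZero q] {S : Finset (ZMod q)}

theorem two_pow_mul_sum_countTwoPowDvd (h : Splits (multiplierSet w : Set ℤ) (S : Set (ZMod q)))
    {e : ℕ} (he : 2 ^ e ∣ q) :
    2 ^ e * (∑ i ∈ range (w + 1), 2 ^ (w - i) * countTwoPowDvd S (e - i) + 1) = q := by
  set T : Finset (ZMod q) := {x | 2 ^ e ∣ x.val}
  have hF : ∀ i (u : ℤ), Odd u → #{s ∈ S | (2 ^ i * u) • s ∈ T} = countTwoPowDvd S (e - i) :=
    fun i u hu => by
      simp only [T, countTwoPowDvd, mem_filter, mem_univ, true_and,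
        ZMod.two_pow_dvd_val_zsmul_iff he i hu]
  have hT := h.sum_card_filter_smul_mem T
  rw [sum_multiplierSet_eq w (F := fun m => #{s ∈ S | m • s ∈ T}) hF,
    card_erase_of_mem (by simp [T]), ZMod.card_filter_dvd_val he] at hT
  simp only [smul_eq_mul] at hT
  rw [hT, Nat.sub_add_cancel (Nat.div_pos (Nat.le_of_dvd (Nat.pos_of_ne_zero (NeZero.ne q)) he)
      (by positivity)), Nat.mul_div_cancel' he]

theorem countTwoPowDvd_zero (h : Splits (multiplierSet w : Set ℤ) (S : Set (ZMod q))) :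
    (2 ^ (w + 1) - 1) * countTwoPowDvd S 0 + 1 = q := by
  have := h.two_pow_mul_sum_countTwoPowDvd (e := 0) (one_dvd q)
  simp only [pow_zero, one_mul, Nat.zero_sub, ← sum_mul, sum_range_two_pow_sub] at this
  exact this

theorem countTwoPowDvd_sub (h : Splits (multiplierSet w : Set ℤ) (S : Set (ZMod q)))
    {e : ℕ} (he : 2 ^ e ∣ q) (he1 : 1 ≤ e) :
    countTwoPowDvd S (e - (w + 1)) = 2 ^ (w + 1) * countTwoPowDvd S e + 1 := by
  have hE := h.two_pow_mul_sum_countTwoPowDvd he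
  have hE' := h.two_pow_mul_sum_countTwoPowDvd ((pow_dvd_pow 2 (Nat.sub_le e 1)).trans he)
  rw [← Nat.sub_add_cancel he1, pow_succ, mul_assoc] at hE
  have := Nat.eq_of_mul_eq_mul_left (by positivity) (hE.trans hE'.symm)
  rw [Nat.sub_add_cancel he1] at this
  have := sum_range_two_pow_sub_mul_pred w e (countTwoPowDvd S)
  rw [Nat.sub_sub, Nat.add_comm 1 w] at this
  omega

theorem countTwoPowDvd_factorization_eq_zero (hw : 1 ≤ w)
    (h : Splits (multiplierSet w : Set ℤ) (S : Set (ZMod q)))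
    (hlevel : countTwoPowDvd S (q.factorization 2 - w) = countTwoPowDvd S (q.factorization 2)) :
    countTwoPowDvd S (q.factorization 2) = 0 := by
  set a := q.factorization 2
  have hq : 2 ^ a ∣ q := Nat.ordProj_dvd q 2
  have hsub : {s ∈ S | 2 ^ (a - w) ∣ s.val} ⊆ {s ∈ S | 2 ^ a ∣ s.val} :=
    (eq_of_subset_of_card_le
      (monotone_filter_right S fun _ _ hs => (pow_dvd_pow 2 (Nat.sub_le a w)).trans hs)
      (by exact hlevel.le)).ge
  rw [countTwoPowDvd, card_eq_zero, filter_eq_empty_iff]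
  intro s hs hsa
  obtain ⟨s', hs', hs's⟩ := h.exists_two_pow_smul_eq_neg hs
  have hx : (2 : ℤ) ^ w • (s + s') = 0 := by rw [smul_add, hs's, add_neg_cancel]
  have h1 := ZMod.two_pow_sub_dvd_val_of_zsmul_eq_zero hq hx
  have h2 : 2 ^ (a - w) ∣ s'.val :=
    (ZMod.dvd_val_add_iff ((pow_dvd_pow 2 (Nat.sub_le a w)).trans hq)
      ((pow_dvd_pow 2 (Nat.sub_le a w)).trans hsa) s').mp h1
  have h3 : 2 ^ a ∣ s'.val := (mem_filter.mp (hsub (mem_filter.mpr ⟨hs', h2⟩))).2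
  exact h.add_ne_zero hw hs hs' (ZMod.eq_zero_of_two_pow_factorization_dvd_val
    ((ZMod.dvd_val_add_iff hq hsa s').mpr h3) hx)

end Splits

theorem stmt12 (w q : ℕ) (hw : 1 ≤ w) (hq : 1 < q)
    (S : Set (ZMod q))
    (hsplit : Splits {m : ℤ | -((2 : ℤ) ^ w - 1) ≤ m ∧ m ≤ 2 ^ w ∧ m ≠ 0} S) :
    ∃ r : ℕ, 1 ≤ r ∧ q = 2 ^ (r * (w + 1)) := by
  have : NeZero q := ⟨by omega⟩
  obtain ⟨S, rfl⟩ := S.toFinite.exists_finset_coe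
  rw [← coe_multiplierSet] at hsplit
  set a := q.factorization 2
  set u : ℕ → ℕ := fun k => (2 ^ (w + 1) - 1) * countTwoPowDvd S k + 1
  have hu : ∀ e, 1 ≤ e → e ≤ a → u (e - (w + 1)) = 2 ^ (w + 1) * u e := fun e he1 he => by
    have hdvd : 2 ^ e ∣ q := (pow_dvd_pow 2 he).trans (Nat.ordProj_dvd q 2)
    obtain ⟨N, hN⟩ : ∃ N, 2 ^ (w + 1) = N + 1 := ⟨_, (Nat.sub_add_cancel Nat.one_le_two_pow).symm⟩
    simp only [u, hsplit.countTwoPowDvd_sub hdvd he1, hN, Nat.add_sub_cancel]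
    ring
  have hu0 : u 0 = q := hsplit.countTwoPowDvd_zero
  obtain ⟨r, ha, hqa, hlevel⟩ := exists_eq_mul_of_recurrence hu fun k hk =>
    (Nat.prime_two.pow_dvd_iff_le_factorization (by omega)).mp (hu0 ▸ hk)
  have hpos : 0 < 2 ^ (w + 1) - 1 := Nat.sub_pos_of_lt (Nat.one_lt_two_pow (by omega))
  have hzero : countTwoPowDvd S a = 0 := hsplit.countTwoPowDvd_factorization_eq_zero hw
    (Nat.eq_of_mul_eq_mul_left hpos (Nat.add_right_cancel hlevel))
  simp only [hu0, u, hzero, mul_zero, zero_add, mul_one] at hqa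
  refine ⟨r, Nat.pos_of_ne_zero fun hr => ?_, by rw [← hqa, ha]⟩
  rw [← hqa, ha, hr] at hq
  simp at hq
end

section
/- Let M = {-1, 1, 2}. If M and some finite set S split a finite additive abelian group G with |G| > 1, then |G| = 4^ℓ and |S| = (4^ℓ - 1)/3 for some integer ℓ ≥ 1. Hence the (2,1,n)-quasi-cross admits a lattice tiling arising from a group splitting only for dimensions n = (4^ℓ - 1)/3, the parameters of the recursive construction over ℤ/4^ℓℤ. -/
open Finset Function

theorem AddCommGroup.exists_surjective_zmod_of_dvd_card {G : Type*} [AddCommGroup G] [Finite G]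
    {p : ℕ} (hp : p.Prime) (hdvd : p ∣ Nat.card G) : ∃ φ : G →+ ZMod p, Surjective φ := by
  obtain ⟨ι, _, n, -, ⟨e⟩⟩ := AddCommGroup.equiv_directSum_zmod_of_finite' G
  let e' := e.trans (DirectSum.addEquivProd fun i => ZMod (n i))
  have hcard : Nat.card G = ∏ i, n i := by
    rw [Nat.card_congr e'.toEquiv, Nat.card_pi]
    simp
  obtain ⟨i, -, hi⟩ := hp.prime.exists_mem_finset_dvd (hcard ▸ hdvd)
  exact ⟨(ZMod.castHom hi (ZMod p)).toAddMonoidHom.comp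
      ((Pi.evalAddMonoidHom _ i).comp e'.toAddMonoidHom),
    (ZMod.castHom_surjective hi).comp ((surjective_eval i).comp e'.surjective)⟩

theorem ZMod.three_dvd_of_forall_neg_two_mul_add_two_mul_add {p : ℕ} [Fact p.Prime] (hp : p ≠ 2)
    (f : ZMod p → ℕ) (N : ℕ) (h : ∀ x ≠ 0, f (-(2 * x)) + f (2 * x) + f x = N) : 3 ∣ N := by
  have htwo : (2 : ZMod p) ≠ 0 := Ring.two_ne_zero (by rwa [ZMod.ringChar_zmod_n])
  have f_neg : ∀ x ≠ 0, f (-x) = f x := by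
    intro x hx
    have := h (-x) (neg_ne_zero.mpr hx)
    rw [mul_neg, neg_neg] at this
    have := h x hx
    omega
  have two_mul_add : ∀ x ≠ 0, 2 * f (2 * x) + f x = N := by
    intro x hx
    have := f_neg (2 * x) (mul_ne_zero htwo hx)
    have := h x hx
    omega
  let g : ZMod p → ℤ := fun x => 3 * f x - N
  have g_one : ∀ t : ℕ, g 1 = (-2) ^ t * g (2 ^ t) := by
    intro t
    induction t with
    | zero => simp
    | succ t ih =>
      have := two_mul_add (2 ^ t) (pow_ne_zero t htwo)
      rw [ih, pow_succ', pow_succ' (2 : ZMod p)]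
      simp only [g]
      push_cast [← this]
      ring
  have g_one_eq : g 1 = 4 ^ (p - 1) * g 1 := by
    have := g_one (2 * (p - 1))
    rwa [pow_mul, pow_mul' (2 : ZMod p), ZMod.pow_card_sub_one_eq_one htwo, one_pow] at this
  have one_lt_four_pow : (1 : ℤ) < 4 ^ (p - 1) :=
    one_lt_pow₀ (by norm_num) (Nat.sub_ne_zero_of_lt (Fact.out : p.Prime).one_lt)
  have : g 1 = 0 := by nlinarith
  simp only [g] at this
  exact ⟨f 1, by omega⟩

theorem Nat.exists_eq_four_pow_of_mod_three {n : ℕ} (hn : 1 < n)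
    (h2 : ∀ {p : ℕ}, p.Prime → p ∣ n → p = 2) (h3 : n % 3 = 1) : ∃ ℓ, 1 ≤ ℓ ∧ n = 4 ^ ℓ := by
  have hpow := Nat.eq_prime_pow_of_unique_prime_dvd (by omega) h2
  rcases Nat.even_or_odd' n.primeFactorsList.length with ⟨ℓ, hℓ | hℓ⟩
  · rw [hℓ, pow_mul] at hpow
    refine ⟨ℓ, Nat.pos_of_ne_zero ?_, hpow⟩
    rintro rfl
    simp [hpow] at hn
  · rw [hℓ, pow_succ, pow_mul] at hpow
    have : 4 ^ ℓ % 3 = 1 := by rw [Nat.pow_mod]; norm_num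
    norm_num at hpow
    omega

namespace Splits

variable {G : Type*} [AddCommGroup G] [Fintype G] [DecidableEq G] {M : Finset ℤ} {S : Finset G}

theorem sum_card_filter (h : Splits (M : Set ℤ) (S : Set G)) (P : G → Prop) [DecidablePred P] :
    ∑ m ∈ M, #{s ∈ S | P (m • s)} = #{g | P g ∧ g ≠ 0} := by
  calc ∑ m ∈ M, #{s ∈ S | P (m • s)} = #{q ∈ M ×ˢ S | P (q.1 • q.2)} := by
        simp only [card_filter, sum_product]
    _ = #{g | P g ∧ g ≠ 0} := by
      refine Set.BijOn.finsetCard_eq (fun q : ℤ × G => q.1 • q.2) ?_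
      have := h.inter_mapsTo (s₂ := {q : ℤ × G | P (q.1 • q.2)}) (t₂ := {g | P g})
        (fun _ hq => hq) (fun _ hq => hq.2)
      convert this using 1 <;> ext <;> simp [and_comm]

theorem card_filter_neg_add_card_filter_add_card_filter_two_nsmul
    (h : Splits ({-1, 1, 2} : Set ℤ) (S : Set G)) (P : G → Prop) [DecidablePred P] :
    #{s ∈ S | P (-s)} + #{s ∈ S | P s} + #{s ∈ S | P (2 • s)} = #{g | P g ∧ g ≠ 0} := by
  have hM : (({-1, 1, 2} : Finset ℤ) : Set ℤ) = {-1, 1, 2} := by simp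
  rw [← hM] at h
  rw [← h.sum_card_filter P, sum_insert (by decide), sum_insert (by decide), sum_singleton,
    add_assoc]
  simp only [neg_one_zsmul, one_smul, ofNat_zsmul]

theorem card_eq_three_mul_add_one (h : Splits ({-1, 1, 2} : Set ℤ) (S : Set G)) :
    Fintype.card G = 3 * #S + 1 := by
  have := h.card_filter_neg_add_card_filter_add_card_filter_two_nsmul fun _ => True
  simp only [filter_true, true_and, filter_ne'] at this
  rw [card_erase_of_mem (mem_univ 0), card_univ] at this
  have := Fintype.card_pos (α := G)
  omega

theorem not_surjective_zmod (h : Splits ({-1, 1, 2} : Set ℤ) (S : Set G)) {p : ℕ} [Fact p.Prime]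
    (hp : p ≠ 2) (φ : G →+ ZMod p) : ¬ Surjective φ := by
  intro hφ
  have htwo : (2 : ZMod p) ≠ 0 := Ring.two_ne_zero (by rwa [ZMod.ringChar_zmod_n])
  let f : ZMod p → ℕ := fun y => #{s ∈ S | φ s = y}
  have hker : 3 * f 0 + 1 = #{g | φ g = 0} := by
    have := h.card_filter_neg_add_card_filter_add_card_filter_two_nsmul fun g => φ g = 0
    simp only [map_neg, neg_eq_zero, map_nsmul, nsmul_eq_mul, Nat.cast_ofNat, mul_eq_zero,
      htwo, false_or, ← filter_filter, filter_ne'] at this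
    rw [card_erase_of_mem (by simp)] at this
    have : 0 < #{g | φ g = 0} := card_pos.mpr ⟨0, by simp⟩
    simp only [f]
    omega
  have hfibre : ∀ x ≠ 0, f (-(2 * x)) + f (2 * x) + f x = #{g | φ g = 0} := by
    intro x hx
    have := h.card_filter_neg_add_card_filter_add_card_filter_two_nsmul fun g => φ g = 2 * x
    simp only [map_neg, neg_eq_iff_eq_neg, map_nsmul, nsmul_eq_mul, Nat.cast_ofNat,
      mul_right_inj' htwo] at this
    have hne : ∀ g, φ g = 2 * x → g ≠ 0 := by
      rintro g hg rfl
      exact mul_ne_zero htwo hx (by simpa using hg.symm)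
    rwa [filter_congr fun g _ => and_iff_left_of_imp (hne g),
      AddMonoidHom.card_fiber_eq_of_mem_range φ (hφ _) (hφ 0)] at this
  have := ZMod.three_dvd_of_forall_neg_two_mul_add_two_mul_add hp f _ hfibre
  omega

end Splits

theorem stmt13_general {G : Type*} [AddCommGroup G] [Fintype G] (hG : 1 < Fintype.card G)
    (S : Set G)
    (hsplit : Splits ({-1, 1, 2} : Set ℤ) S) :
    ∃ ℓ : ℕ, 1 ≤ ℓ ∧ Fintype.card G = 4 ^ ℓ ∧ Nat.card ↥S = (4 ^ ℓ - 1) / 3 := by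
  classical
  lift S to Finset G using S.toFinite
  have hcard : Fintype.card G = 3 * #S + 1 := hsplit.card_eq_three_mul_add_one
  have only_two_dvd : ∀ {p : ℕ}, p.Prime → p ∣ Fintype.card G → p = 2 := by
    intro p hp hdvd
    by_contra hp2
    have := Fact.mk hp
    obtain ⟨φ, hφ⟩ := AddCommGroup.exists_surjective_zmod_of_dvd_card hp
      (by rwa [Nat.card_eq_fintype_card (α := G)])
    exact hsplit.not_surjective_zmod hp2 φ hφ
  obtain ⟨ℓ, hℓ, hfour⟩ := Nat.exists_eq_four_pow_of_mod_three hG only_two_dvd (by omega)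
  refine ⟨ℓ, hℓ, hfour, ?_⟩
  rw [Nat.card_coe_set_eq, Set.ncard_coe_finset]
  omega

theorem stmt13 {G : Type*} [AddCommGroup G] [Fintype G] (hG : 1 < Fintype.card G)
    (S : Set G) (hSfin : S.Finite)
    (hsplit : Splits ({-1, 1, 2} : Set ℤ) S) :
    ∃ ℓ : ℕ, 1 ≤ ℓ ∧ Fintype.card G = 4 ^ ℓ ∧ Nat.card ↥S = (4 ^ ℓ - 1) / 3 :=
  stmt13_general hG S hsplit
end

section
/- Let k₊, k₋ be integers with 0 < k₋ < k₊ and M = [-k₋, k₊]*, let G be a finite additive abelian group, and let s₁, …, sₙ ∈ G be such that the elements m • sᵢ (m ∈ M, 1 ≤ i ≤ n) are pairwise distinct and all nonzero. Define the group homomorphism φ : ℤⁿ → G by φ(x₁, …, xₙ) = Σᵢ xᵢ • sᵢ, and let Λ = ker φ. Then the translates of the (k₊, k₋, n)-quasi-cross E by distinct elements of Λ are pairwise disjoint: for u, v ∈ Λ with u ≠ v, (u + E) ∩ (v + E) = ∅. -/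
/-! The hypotheses on the `sᵢ` say exactly that `φ` is injective on the quasi-cross `E`. If
`u + a = v + b` with `a, b ∈ E` and `u, v ∈ ker φ`, then `φ a = φ b`, so `a = b` and `u = v`. -/

open Pointwise

/-- The homomorphism `φ : ℤⁿ → G`, `φ(x₁, …, xₙ) = Σᵢ xᵢ • sᵢ`. -/
def phiHom {G : Type*} [AddCommGroup G] {n : ℕ} (s : Fin n → G) : (Fin n → ℤ) →+ G where
  toFun x := ∑ i, x i • s i
  map_zero' := by simp
  map_add' x y := by simp [add_smul, Finset.sum_add_distrib]

theorem Set.InjOn.disjoint_vadd_of_mem_ker {A B : Type*} [AddGroup A] [AddGroup B]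
    {f : A →+ B} {E : Set A} (hf : Set.InjOn f E) {u v : A} (hu : u ∈ f.ker) (hv : v ∈ f.ker)
    (huv : u ≠ v) : Disjoint (u +ᵥ E) (v +ᵥ E) := by
  rw [Set.disjoint_left]
  rintro _ ⟨a, ha, rfl⟩ ⟨b, hb, hab⟩
  simp only [vadd_eq_add] at hab
  have hfab : f b = f a := by
    simpa [AddMonoidHom.mem_ker.mp hu, AddMonoidHom.mem_ker.mp hv] using congrArg f hab
  rw [hf hb ha hfab] at hab
  exact huv (add_right_cancel hab).symm

theorem phiHom_single {G : Type*} [AddCommGroup G] {n : ℕ} (s : Fin n → G) (i : Fin n) (m : ℤ) :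
    phiHom s (Pi.single i m) = m • s i := by
  simp [phiHom, Pi.single_apply, ite_smul]

theorem injOn_phiHom_quasiCross {G : Type*} [AddCommGroup G] {kp km : ℤ} {n : ℕ}
    {s : Fin n → G} (hne : ∀ m, -km ≤ m ∧ m ≤ kp ∧ m ≠ 0 → ∀ i, m • s i ≠ 0)
    (hdist : ∀ m, -km ≤ m ∧ m ≤ kp ∧ m ≠ 0 → ∀ m', -km ≤ m' ∧ m' ≤ kp ∧ m' ≠ 0 →
      ∀ i i', m • s i = m' • s i' → m = m' ∧ i = i') :
    Set.InjOn (phiHom s) (quasiCross kp km n) := by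
  rintro x (rfl | ⟨i, m, hm₁, hm₂, hm₃, rfl⟩) y (rfl | ⟨i', m', hm₁', hm₂', hm₃', rfl⟩) hxy
  · rfl
  · rw [map_zero, phiHom_single] at hxy
    exact absurd hxy.symm (hne m' ⟨hm₁', hm₂', hm₃'⟩ i')
  · rw [map_zero, phiHom_single] at hxy
    exact absurd hxy (hne m ⟨hm₁, hm₂, hm₃⟩ i)
  · rw [phiHom_single, phiHom_single] at hxy
    obtain ⟨rfl, rfl⟩ := hdist m ⟨hm₁, hm₂, hm₃⟩ m' ⟨hm₁', hm₂', hm₃'⟩ i i' hxy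
    rfl

theorem stmt14_general {G : Type*} [AddCommGroup G]
    (kp km : ℤ) (n : ℕ) (s : Fin n → G)
    (hne : ∀ m ∈ {m : ℤ | -km ≤ m ∧ m ≤ kp ∧ m ≠ 0}, ∀ i : Fin n, m • s i ≠ 0)
    (hdist : ∀ m ∈ {m : ℤ | -km ≤ m ∧ m ≤ kp ∧ m ≠ 0},
      ∀ m' ∈ {m : ℤ | -km ≤ m ∧ m ≤ kp ∧ m ≠ 0},
      ∀ i i' : Fin n, m • s i = m' • s i' → m = m' ∧ i = i')
    (u v : Fin n → ℤ) (hu : u ∈ (phiHom s).ker) (hv : v ∈ (phiHom s).ker) (huv : u ≠ v) :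
    (u +ᵥ quasiCross kp km n) ∩ (v +ᵥ quasiCross kp km n) = ∅ :=
  Set.disjoint_iff_inter_eq_empty.mp
    ((injOn_phiHom_quasiCross hne hdist).disjoint_vadd_of_mem_ker hu hv huv)

theorem stmt14 {G : Type*} [AddCommGroup G] [Fintype G]
    (kp km : ℤ) (h0 : 0 < km) (hlt : km < kp) (n : ℕ) (s : Fin n → G)
    (hne : ∀ m ∈ {m : ℤ | -km ≤ m ∧ m ≤ kp ∧ m ≠ 0}, ∀ i : Fin n, m • s i ≠ 0)
    (hdist : ∀ m ∈ {m : ℤ | -km ≤ m ∧ m ≤ kp ∧ m ≠ 0},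
      ∀ m' ∈ {m : ℤ | -km ≤ m ∧ m ≤ kp ∧ m ≠ 0},
      ∀ i i' : Fin n, m • s i = m' • s i' → m = m' ∧ i = i')
    (u v : Fin n → ℤ) (hu : u ∈ (phiHom s).ker) (hv : v ∈ (phiHom s).ker) (huv : u ≠ v) :
    (u +ᵥ quasiCross kp km n) ∩ (v +ᵥ quasiCross kp km n) = ∅ :=
  stmt14_general kp km n s hne hdist u v hu hv huv
end

section
/- Let n ≥ 2, let k₊, k₋ be integers with 0 < k₋ < k₊ and M = [-k₋, k₊]*, let G be a finite additive abelian group with |G| = n(k₊ + k₋) + 1, and suppose M and S = {s₁, …, sₙ} split G. Then for every i with 2 ≤ i ≤ n there exist integers x and y with k₊ + 1 ≤ x ≤ ⌊(n(k₊ + k₋) + 1)/(k₋ + 1)⌋, |y| ≤ k₋, and x • s₁ + y • sᵢ = 0 in G. -/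
namespace Splits

variable {G : Type*} [AddCommGroup G] {M : Set ℤ} {S : Set G}

theorem smul_ne_zero (h : Splits M S) {m : ℤ} {g : G} (hm : m ∈ M) (hg : g ∈ S) :
    m • g ≠ 0 :=
  h.mapsTo (Set.mk_mem_prod hm hg)

theorem eq_of_smul_eq_smul (h : Splits M S) {m m' : ℤ} {g g' : G} (hm : m ∈ M) (hm' : m' ∈ M)
    (hg : g ∈ S) (hg' : g' ∈ S) (heq : m • g = m' • g') : g = g' :=
  congrArg Prod.snd (h.injOn (Set.mk_mem_prod hm hg) (Set.mk_mem_prod hm' hg') heq)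

theorem smul_add_smul_ne_zero (h : Splits M S) {x y : ℤ} {g g' : G} (hx : x ∈ M)
    (hy : y = 0 ∨ -y ∈ M) (hg : g ∈ S) (hg' : g' ∈ S) (hne : g ≠ g') : x • g + y • g' ≠ 0 := by
  intro hrel
  rcases hy with rfl | hy
  · exact h.smul_ne_zero hx hg (by simpa using hrel)
  · refine hne (h.eq_of_smul_eq_smul hx hy hg hg' ?_)
    rw [neg_zsmul]
    exact eq_neg_of_add_eq_zero_left hrel

theorem lt_of_smul_add_smul_eq_zero {km kp : ℤ}
    (h : Splits {m : ℤ | -km ≤ m ∧ m ≤ kp ∧ m ≠ 0} S) (hk : km ≤ kp) {x y : ℤ} {g g' : G}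
    (hg : g ∈ S) (hg' : g' ∈ S) (hne : g ≠ g') (hx : 0 < x) (hy : |y| ≤ km)
    (hrel : x • g + y • g' = 0) : kp < x := by
  by_contra! hxk
  have hy' := abs_le.mp hy
  refine h.smul_add_smul_ne_zero ⟨by omega, hxk, hx.ne'⟩ ?_ hg hg' hne hrel
  exact (eq_or_ne y 0).imp_right fun hy0 => ⟨by omega, by omega, neg_ne_zero.mpr hy0⟩

end Splits

section Relations

variable {G : Type*} [AddCommGroup G] [Fintype G] (a b : G) (k : ℤ)

theorem exists_minimal_relation (hk : 0 ≤ k) :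
    ∃ X : ℕ, 0 < X ∧ (∃ y : ℤ, |y| ≤ k ∧ (X : ℤ) • a + y • b = 0) ∧
      ∀ x : ℕ, 0 < x → x < X → ∀ y : ℤ, |y| ≤ k → (x : ℤ) • a + y • b ≠ 0 := by
  classical
  have hex : ∃ X : ℕ, 0 < X ∧ ∃ y : ℤ, |y| ≤ k ∧ (X : ℤ) • a + y • b = 0 :=
    ⟨Fintype.card G, Fintype.card_pos, 0, by simpa using hk, by simp [card_nsmul_eq_zero]⟩
  exact ⟨Nat.find hex, (Nat.find_spec hex).1, (Nat.find_spec hex).2,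
    fun x hx hxX y hy hrel => Nat.find_min hex hxX ⟨hx, y, hy, hrel⟩⟩

theorem mul_le_card_of_no_short_relation (X : ℕ)
    (hb : ∀ t : ℤ, t ≠ 0 → |t| ≤ k → t • b ≠ 0)
    (ha : ∀ x : ℕ, 0 < x → x < X → ∀ y : ℤ, |y| ≤ k → (x : ℤ) • a + y • b ≠ 0) :
    (k + 1) * X ≤ Fintype.card G := by
  have ha' : ∀ d e : ℤ, 0 < d → d < X → |e| ≤ k → d • a + e • b ≠ 0 := by
    intro d e hd hdX he
    have := ha d.toNat (by omega) (by omega) e he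
    rwa [Int.toNat_of_nonneg hd.le] at this
  set F : Finset (ℤ × ℤ) := Finset.Icc 0 k ×ˢ Finset.Ico 0 (X : ℤ)
  have hinj : Set.InjOn (fun p : ℤ × ℤ => p.1 • b + p.2 • a) F := by
    rintro ⟨t, u⟩ hp ⟨t', u'⟩ hp' heq
    simp only [F, Finset.coe_product, Finset.coe_Icc, Finset.coe_Ico, Set.mem_prod,
      Set.mem_Icc, Set.mem_Ico] at hp hp' heq
    have hdiff : (u - u') • a + (t - t') • b = 0 := by
      simp only [sub_zsmul]
      linear_combination (norm := abel) heq
    have hu : u = u' := by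
      by_contra hne
      rcases lt_or_gt_of_ne hne with hlt | hlt
      · refine ha' (u' - u) (t' - t) (by omega) (by omega) (abs_le.mpr ⟨by omega, by omega⟩) ?_
        rw [← neg_sub u, ← neg_sub t, neg_zsmul, neg_zsmul, ← neg_add, hdiff, neg_zero]
      · exact ha' (u - u') (t - t') (by omega) (by omega) (abs_le.mpr ⟨by omega, by omega⟩) hdiff
    subst hu
    have ht : t = t' := by
      by_contra hne
      exact hb (t - t') (sub_ne_zero.mpr hne) (abs_le.mpr ⟨by omega, by omega⟩)
        (by simpa using hdiff)
    rw [ht]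
  have hcard : F.card ≤ Fintype.card G :=
    Finset.card_le_card_of_injOn _ (fun _ _ => Finset.mem_coe.mpr (Finset.mem_univ _)) hinj
  have hF : (F.card : ℤ) = (k + 1).toNat * X := by
    simp [F, Finset.card_product, Int.card_Icc, Int.card_Ico]
  calc (k + 1) * X ≤ (k + 1).toNat * X := by gcongr; exact Int.self_le_toNat _
    _ = F.card := hF.symm
    _ ≤ Fintype.card G := by exact_mod_cast hcard

end Relations

theorem stmt17 {G : Type*} [AddCommGroup G] [Fintype G]
    (n : ℕ) (hn : 2 ≤ n) (kp km : ℤ) (h0 : 0 < km) (hlt : km < kp)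
    (s : Fin n → G) (hs : Function.Injective s)
    (hcard : (Fintype.card G : ℤ) = n * (kp + km) + 1)
    (hsplit : Splits {m : ℤ | -km ≤ m ∧ m ≤ kp ∧ m ≠ 0} (Set.range s))
    (i : Fin n) (hi : i ≠ ⟨0, by omega⟩) :
    ∃ x y : ℤ, kp + 1 ≤ x ∧ x ≤ ((n : ℤ) * (kp + km) + 1) / (km + 1) ∧
      |y| ≤ km ∧ x • s ⟨0, by omega⟩ + y • s i = 0 := by
  obtain ⟨X, hXpos, ⟨y, hy, hrel⟩, hmin⟩ :=
    exists_minimal_relation (s ⟨0, by omega⟩) (s i) km h0.le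
  have hkpX : kp < X := hsplit.lt_of_smul_add_smul_eq_zero hlt.le ⟨_, rfl⟩ ⟨i, rfl⟩
    (fun h => hi (hs h).symm) (by exact_mod_cast hXpos) hy hrel
  have hshort : ∀ t : ℤ, t ≠ 0 → |t| ≤ km → t • s i ≠ 0 := fun t ht htk =>
    have := abs_le.mp htk
    hsplit.smul_ne_zero ⟨by omega, by omega, ht⟩ ⟨i, rfl⟩
  have hcount := mul_le_card_of_no_short_relation _ _ km X hshort hmin
  refine ⟨X, y, by omega, ?_, hy, hrel⟩
  rw [Int.le_ediv_iff_mul_le (by omega)]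
  linarith
end
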